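/- arXiv:2402.14607 — 5 statements merged into one kernel-verified Lean document; each statement's English description precedes it below -/
import Mathlib

section
/- Let A be a finite set with |A| = 2^t and let f : A × A → F_2 be a Hadamard function. Let X and Y be independent random variables on A, each with min-entropy at least k, where k ≤ t is a real number. Then (1 − ε)/2 ≤ Pr[f(X,Y) = 1] ≤ (1 + ε)/2, where ε = 2^{1 − (2k − t)/2}; equivalently, |Pr[f(X,Y) = 1] − 1/2| ≤ 2^{−(2k − t)/2}. -/
/-- Let `A` be a finite set with `|A| = 2^t` and `f : A × A → 𝔽₂` a Hadamard
function. Let `X, Y` be independent random variables on `A` (given by their distributions,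
the joint probability being the product), each with min-entropy at least `k`, where `k ≤ t`
is a real number. Then `|Pr[f(X,Y) = 1] − 1/2| ≤ 2^{−(2k − t)/2}` (equivalently,
`(1−ε)/2 ≤ Pr[f(X,Y)=1] ≤ (1+ε)/2` with `ε = 2^{1−(2k−t)/2}`). -/
theorem stmt_3 {A : Type*} [Fintype A] [DecidableEq A]
    (t : ℕ) (ht : Fintype.card A = 2 ^ t)
    (f : A × A → ZMod 2)
    (hf : ∀ x x' : A, x ≠ x' →
      ∑ y : A, (if f (x, y) = 0 then (1 : ℤ) else -1) *
        (if f (x', y) = 0 then (1 : ℤ) else -1) = 0)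
    (k : ℝ) (hk : k ≤ (t : ℝ))
    (X Y : A → ℝ)
    (hX0 : ∀ a, 0 ≤ X a) (hX1 : ∑ a, X a = 1)
    (hY0 : ∀ a, 0 ≤ Y a) (hY1 : ∑ a, Y a = 1)
    (hXk : ∀ a, X a ≤ (2 : ℝ) ^ (-k)) (hYk : ∀ a, Y a ≤ (2 : ℝ) ^ (-k)) :
    |(∑ a : A, ∑ b : A, X a * Y b * (if f (a, b) = 1 then (1 : ℝ) else 0)) - 1 / 2|
      ≤ (2 : ℝ) ^ (-(2 * k - t) / 2) := by
  classical
  set g : A → A → ℝ := fun a b => if f (a, b) = 0 then 1 else -1 with hgdef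
  have hcases : ∀ z : ZMod 2, z = 0 ∨ z = 1 := by decide
  have hind : ∀ a b : A, (if f (a, b) = 1 then (1 : ℝ) else 0) = (1 - g a b) / 2 := by
    intro a b
    rcases hcases (f (a, b)) with h | h <;> simp [hgdef, h]
  have hgsq : ∀ a b : A, g a b * g a b = 1 := by
    intro a b
    by_cases h : f (a, b) = 0 <;> simp [hgdef, h]
  -- the correlation sum
  set S : ℝ := ∑ b : A, Y b * ∑ a : A, X a * g a b with hSdef
  -- rewrite the probability
  have hprob : (∑ a : A, ∑ b : A, X a * Y b * (if f (a, b) = 1 then (1 : ℝ) else 0))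
      = (1 - S) / 2 := by
    have h1 : (∑ a : A, ∑ b : A, X a * Y b * (if f (a, b) = 1 then (1 : ℝ) else 0))
        = ∑ a : A, ∑ b : A, (X a * Y b / 2 - X a * Y b * g a b / 2) := by
      refine Finset.sum_congr rfl fun a _ => Finset.sum_congr rfl fun b _ => ?_
      rw [hind a b]; ring
    have h2 : ∑ a : A, ∑ b : A, X a * Y b = 1 := by
      rw [← Finset.sum_mul_sum, hX1, hY1]; norm_num
    have h3 : ∑ a : A, ∑ b : A, X a * Y b * g a b = S := by
      rw [hSdef, Finset.sum_comm]
      refine Finset.sum_congr rfl fun b _ => ?_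
      rw [Finset.mul_sum]
      exact Finset.sum_congr rfl fun a _ => by ring
    have h4 : ∑ a : A, ∑ b : A, (X a * Y b / 2 - X a * Y b * g a b / 2)
        = (∑ a : A, ∑ b : A, X a * Y b) / 2
          - (∑ a : A, ∑ b : A, X a * Y b * g a b) / 2 := by
      simp [Finset.sum_sub_distrib, Finset.sum_div]
    rw [h1, h4, h2, h3]; ring
  -- sum of squares bounds
  have hXsq : ∑ a : A, X a ^ 2 ≤ (2 : ℝ) ^ (-k) := by
    calc ∑ a : A, X a ^ 2 ≤ ∑ a : A, (2 : ℝ) ^ (-k) * X a := by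
          refine Finset.sum_le_sum fun a _ => ?_
          have := mul_le_mul_of_nonneg_right (hXk a) (hX0 a)
          nlinarith [hX0 a]
      _ = (2 : ℝ) ^ (-k) := by rw [← Finset.mul_sum, hX1, mul_one]
  have hYsq : ∑ b : A, Y b ^ 2 ≤ (2 : ℝ) ^ (-k) := by
    calc ∑ b : A, Y b ^ 2 ≤ ∑ b : A, (2 : ℝ) ^ (-k) * Y b := by
          refine Finset.sum_le_sum fun b _ => ?_
          nlinarith [hY0 b, hYk b]
      _ = (2 : ℝ) ^ (-k) := by rw [← Finset.mul_sum, hY1, mul_one]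
  -- orthogonality transferred to ℝ
  have horth : ∀ a a' : A, a ≠ a' → ∑ b : A, g a b * g a' b = 0 := by
    intro a a' hne
    have h := hf a a' hne
    have h2 := congrArg (fun z : ℤ => (z : ℝ)) h
    push_cast at h2
    simpa [hgdef] using h2
  -- the key second moment computation
  have hT : ∑ b : A, (∑ a : A, X a * g a b) ^ 2 = (2 : ℝ) ^ t * ∑ a : A, X a ^ 2 := by
    have expand : ∀ b : A, (∑ a : A, X a * g a b) ^ 2
        = ∑ a : A, ∑ a' : A, X a * X a' * (g a b * g a' b) := by
      intro b
      rw [sq, Finset.sum_mul_sum]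
      exact Finset.sum_congr rfl fun a _ => Finset.sum_congr rfl fun a' _ => by ring
    calc ∑ b : A, (∑ a : A, X a * g a b) ^ 2
        = ∑ b : A, ∑ a : A, ∑ a' : A, X a * X a' * (g a b * g a' b) :=
          Finset.sum_congr rfl fun b _ => expand b
      _ = ∑ a : A, ∑ a' : A, X a * X a' * ∑ b : A, g a b * g a' b := by
          rw [Finset.sum_comm]
          refine Finset.sum_congr rfl fun a _ => ?_
          rw [Finset.sum_comm]
          refine Finset.sum_congr rfl fun a' _ => ?_
          rw [Finset.mul_sum]
      _ = ∑ a : A, X a * X a * ∑ b : A, g a b * g a b := by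
          refine Finset.sum_congr rfl fun a _ => ?_
          rw [Finset.sum_eq_single a]
          · intro a' _ hne
            rw [horth a a' (Ne.symm hne), mul_zero]
          · intro h; exact absurd (Finset.mem_univ a) h
      _ = ∑ a : A, X a ^ 2 * (2 : ℝ) ^ t := by
          refine Finset.sum_congr rfl fun a _ => ?_
          have hrow : ∑ b : A, g a b * g a b = (2 : ℝ) ^ t := by
            calc ∑ b : A, g a b * g a b = ∑ _b : A, (1 : ℝ) :=
                  Finset.sum_congr rfl fun b _ => hgsq a b
              _ = (Fintype.card A : ℝ) := by simp
              _ = (2 : ℝ) ^ t := by rw [ht]; push_cast; ring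
          rw [hrow, sq]
      _ = (2 : ℝ) ^ t * ∑ a : A, X a ^ 2 := by rw [← Finset.sum_mul]; ring
  -- Cauchy–Schwarz
  have hCS : S ^ 2 ≤ (∑ b : A, Y b ^ 2) * ∑ b : A, (∑ a : A, X a * g a b) ^ 2 :=
    Finset.sum_mul_sq_le_sq_mul_sq _ _ _
  have hpow_pos : (0 : ℝ) < (2 : ℝ) ^ (-k) := Real.rpow_pos_of_pos (by norm_num) _
  have hTle : ∑ b : A, (∑ a : A, X a * g a b) ^ 2 ≤ (2 : ℝ) ^ t * (2 : ℝ) ^ (-k) := by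
    rw [hT]
    have : (0 : ℝ) ≤ (2 : ℝ) ^ t := by positivity
    exact mul_le_mul_of_nonneg_left hXsq this
  have hTnonneg : (0 : ℝ) ≤ ∑ b : A, (∑ a : A, X a * g a b) ^ 2 :=
    Finset.sum_nonneg fun b _ => sq_nonneg _
  set B : ℝ := (2 : ℝ) ^ (-(2 * k - t) / 2) with hBdef
  have hBpos : (0 : ℝ) < B := Real.rpow_pos_of_pos (by norm_num) _
  have hBsq : B ^ 2 = (2 : ℝ) ^ (-k) * ((2 : ℝ) ^ t * (2 : ℝ) ^ (-k)) := by
    rw [hBdef, sq, ← Real.rpow_natCast (2 : ℝ) t,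
      ← Real.rpow_add (by norm_num : (0:ℝ) < 2),
      ← Real.rpow_add (by norm_num : (0:ℝ) < 2),
      ← Real.rpow_add (by norm_num : (0:ℝ) < 2)]
    congr 1
    ring
  have hS2 : S ^ 2 ≤ B ^ 2 := by
    rw [hBsq]
    calc S ^ 2 ≤ (∑ b : A, Y b ^ 2) * ∑ b : A, (∑ a : A, X a * g a b) ^ 2 := hCS
      _ ≤ (2 : ℝ) ^ (-k) * ((2 : ℝ) ^ t * (2 : ℝ) ^ (-k)) := by
          apply mul_le_mul hYsq hTle hTnonneg (le_of_lt hpow_pos)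
  have hSabs : |S| ≤ B := by
    nlinarith [sq_abs S, abs_nonneg S]
  rw [hprob]
  have : |(1 - S) / 2 - 1 / 2| = |S| / 2 := by
    rw [show (1 - S) / 2 - 1 / 2 = -(S / 2) by ring, abs_neg, abs_div]
    norm_num
  rw [this]
  linarith
end

section
/- Let q, n ≥ 1, let 1/2 < δ ≤ 1, and let ψ : F_{2^q} → F_2 be a nonzero F_2-linear functional. Let X and Y be independent random variables on (F_{2^q})^n, each with min-entropy at least δqn. Then |Pr[ψ(Ext_IP^{n,q}(X,Y)) = 1] − 1/2| ≤ 2^{−(2δ−1)qn/2}. -/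
open Finset

noncomputable def chiFun {F : Type*} [AddCommGroup F] (ψ : F →+ ZMod 2) (x : F) : ℝ :=
  if ψ x = 1 then -1 else 1

lemma zmod2_cases (u : ZMod 2) : u = 0 ∨ u = 1 := by revert u; decide

lemma chiFun_add {F : Type*} [AddCommGroup F] (ψ : F →+ ZMod 2) (x y : F) :
    chiFun ψ (x + y) = chiFun ψ x * chiFun ψ y := by
  unfold chiFun
  rw [map_add]
  rcases zmod2_cases (ψ x) with h | h <;> rcases zmod2_cases (ψ y) with h' | h' <;>
    simp [h, h']

lemma chiFun_zero {F : Type*} [AddCommGroup F] (ψ : F →+ ZMod 2) : chiFun ψ 0 = 1 := by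
  simp [chiFun]

lemma sum_chiFun {F : Type*} [AddCommGroup F] [Fintype F] (ψ : F →+ ZMod 2)
    (hψ : ∃ z, ψ z = 1) : ∑ x : F, chiFun ψ x = 0 := by
  obtain ⟨z, hz⟩ := hψ
  have h1 : ∑ x : F, chiFun ψ x = ∑ x : F, chiFun ψ (z + x) :=
    Fintype.sum_equiv (Equiv.addLeft z) _ _ (fun x => rfl) |>.symm
  have h2 : ∀ x : F, chiFun ψ (z + x) = - chiFun ψ x := by
    intro x
    rw [chiFun_add]
    rcases zmod2_cases (ψ x) with h | h <;> simp [chiFun, hz, h]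
  rw [Finset.sum_congr rfl (fun x _ => h2 x), Finset.sum_neg_distrib] at h1
  linarith

/-- Sum of the character over all vectors, against a fixed vector c. -/
lemma sum_chiFun_dot {F : Type*} [Field F] [Fintype F] [DecidableEq F] {n : ℕ} (ψ : F →+ ZMod 2)
    (hψ : ∃ z, ψ z = 1) (c : Fin n → F) :
    ∑ a : Fin n → F, chiFun ψ (∑ i, a i * c i) =
      if c = 0 then ((Fintype.card F : ℝ)) ^ n else 0 := by
  by_cases hc : c = 0
  · simp [hc, chiFun_zero, Finset.card_univ]
  · simp only [hc, if_false]
    obtain ⟨i, hi⟩ : ∃ i, c i ≠ 0 := by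
      by_contra h
      push_neg at h
      exact hc (funext h)
    obtain ⟨z, hz⟩ := hψ
    set a0 : Fin n → F := fun j => if j = i then z / c i else 0 with ha0
    have ha0c : ∑ j, a0 j * c j = z := by
      rw [Finset.sum_eq_single i]
      · simp [ha0, div_mul_cancel₀, hi]
      · intro j _ hj; simp [ha0, hj]
      · intro h; simp at h
    have h1 : ∑ a : Fin n → F, chiFun ψ (∑ i, a i * c i) =
        ∑ a : Fin n → F, chiFun ψ (∑ j, (a0 + a) j * c j) :=
      Fintype.sum_equiv (Equiv.addLeft a0) _ _ (fun a => rfl) |>.symm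
    have h2 : ∀ a : Fin n → F, chiFun ψ (∑ j, (a0 + a) j * c j)
        = - chiFun ψ (∑ j, a j * c j) := by
      intro a
      have : ∑ j, (a0 + a) j * c j = (∑ j, a0 j * c j) + ∑ j, a j * c j := by
        rw [← Finset.sum_add_distrib]
        exact Finset.sum_congr rfl (fun j _ => by simp [add_mul])
      rw [this, chiFun_add, ha0c]
      rcases zmod2_cases (ψ (∑ j, a j * c j)) with h | h <;> simp [chiFun, hz, h]
    rw [Finset.sum_congr rfl (fun a _ => h2 a), Finset.sum_neg_distrib] at h1
    linarith

/-- Let `q, n ≥ 1`, `1/2 < δ ≤ 1`, let `F` be the finite field with `2^q`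
elements (viewed as a vector space over `𝔽₂ = ZMod 2`), and let `ψ : F → 𝔽₂` be a nonzero
`𝔽₂`-linear functional. Let `X, Y` be independent random variables on `Fⁿ` (given by their
distributions, the joint being the product), each with min-entropy at least `δqn`. Then
`|Pr[ψ(Ext_IP(X,Y)) = 1] − 1/2| ≤ 2^{−(2δ−1)qn/2}`. -/
theorem stmt_4 (q n : ℕ) (hq : 1 ≤ q) (hn : 1 ≤ n)
    (δ : ℝ) (hδ : 1 / 2 < δ) (hδ1 : δ ≤ 1)
    (F : Type*) [Field F] [Fintype F] [Algebra (ZMod 2) F]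
    (hF : Fintype.card F = 2 ^ q)
    (ψ : F →ₗ[ZMod 2] ZMod 2) (hψ : ∃ z, ψ z = 1)
    (X Y : (Fin n → F) → ℝ)
    (hX0 : ∀ a, 0 ≤ X a) (hX1 : ∑ a, X a = 1)
    (hY0 : ∀ a, 0 ≤ Y a) (hY1 : ∑ a, Y a = 1)
    (hXk : ∀ a, X a ≤ (2 : ℝ) ^ (-(δ * q * n)))
    (hYk : ∀ a, Y a ≤ (2 : ℝ) ^ (-(δ * q * n))) :
    |(∑ a : Fin n → F, ∑ b : Fin n → F,
        X a * Y b * (if ψ (∑ i, a i * b i) = 1 then (1 : ℝ) else 0)) - 1 / 2|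
      ≤ (2 : ℝ) ^ (-(2 * δ - 1) * q * n / 2) := by
  classical
  set ψ' : F →+ ZMod 2 := ψ.toAddMonoidHom with hψ'def
  have hψ'ex : ∃ z, ψ' z = 1 := hψ
  have hψx : ∀ x : F, ψ' x = ψ x := fun x => rfl
  set M : ℝ := (2 : ℝ) ^ (-(δ * q * n)) with hMdef
  have hM0 : 0 < M := Real.rpow_pos_of_pos (by norm_num) _
  -- characteristic 2 facts
  have h2F : (2 : F) = 0 := by
    have h1 : (2 : F) = algebraMap (ZMod 2) F 1 + algebraMap (ZMod 2) F 1 := by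
      rw [map_one]; norm_num
    rw [← map_add] at h1
    have h2 : (1 + 1 : ZMod 2) = 0 := by decide
    rw [h2, map_zero] at h1
    exact h1
  have hself : ∀ x : F, x + x = 0 := by
    intro x; rw [← two_mul, h2F, zero_mul]
  have hvec : ∀ b b' : Fin n → F, b + b' = 0 ↔ b' = b := by
    intro b b'
    constructor
    · intro h
      funext j
      have hj : b j + b' j = 0 := congrFun h j
      have h1 : -(b j) = b' j := neg_eq_of_add_eq_zero_right hj
      have h2 : -(b j) = b j := neg_eq_of_add_eq_zero_left (hself (b j))
      rw [← h1, h2]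
    · intro h; subst h; funext j; exact hself (b' j)
  -- the indicator as an affine function of the character
  have hind : ∀ x : F, (if ψ x = 1 then (1 : ℝ) else 0) = (1 - chiFun ψ' x) / 2 := by
    intro x
    unfold chiFun
    rw [hψx]
    by_cases h : ψ x = 1 <;> simp [h]
  set T : (Fin n → F) → ℝ := fun a => ∑ b, Y b * chiFun ψ' (∑ i, a i * b i) with hTdef
  set D : ℝ := ∑ a, X a * T a with hDdef
  -- Step A: rewrite the probability
  have hsum1 : ∑ a : Fin n → F, ∑ b : Fin n → F, X a * Y b = 1 := by
    have h : ∀ a : Fin n → F, ∑ b : Fin n → F, X a * Y b = X a := by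
      intro a; rw [← Finset.mul_sum, hY1, mul_one]
    rw [Finset.sum_congr rfl (fun a _ => h a), hX1]
  have hDsum : ∑ a : Fin n → F, ∑ b : Fin n → F,
      X a * Y b * chiFun ψ' (∑ i, a i * b i) = D := by
    rw [hDdef]
    refine Finset.sum_congr rfl (fun a _ => ?_)
    rw [hTdef, Finset.mul_sum]
    exact Finset.sum_congr rfl (fun b _ => by ring)
  have hstep : (∑ a : Fin n → F, ∑ b : Fin n → F,
      X a * Y b * (if ψ (∑ i, a i * b i) = 1 then (1 : ℝ) else 0)) = 1 / 2 - D / 2 := by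
    have h : ∀ a b : Fin n → F,
        X a * Y b * (if ψ (∑ i, a i * b i) = 1 then (1 : ℝ) else 0)
          = X a * Y b / 2 - X a * Y b * chiFun ψ' (∑ i, a i * b i) / 2 := by
      intro a b; rw [hind]; ring
    calc (∑ a : Fin n → F, ∑ b : Fin n → F,
        X a * Y b * (if ψ (∑ i, a i * b i) = 1 then (1 : ℝ) else 0))
        = ∑ a : Fin n → F, ∑ b : Fin n → F,
          (X a * Y b / 2 - X a * Y b * chiFun ψ' (∑ i, a i * b i) / 2) :=
        Finset.sum_congr rfl (fun a _ => Finset.sum_congr rfl (fun b _ => h a b))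
      _ = (∑ a : Fin n → F, ∑ b : Fin n → F, X a * Y b) / 2
          - (∑ a : Fin n → F, ∑ b : Fin n → F,
              X a * Y b * chiFun ψ' (∑ i, a i * b i)) / 2 := by
        simp only [Finset.sum_sub_distrib, Finset.sum_div]
      _ = 1 / 2 - D / 2 := by rw [hsum1, hDsum]
  -- Step B: Cauchy-Schwarz
  have hCS : D ^ 2 ≤ ∑ a, X a * T a ^ 2 := by
    have h := Finset.sum_mul_sq_le_sq_mul_sq Finset.univ
      (fun a => Real.sqrt (X a)) (fun a => Real.sqrt (X a) * T a)
    have e1 : ∀ a : Fin n → F, Real.sqrt (X a) * (Real.sqrt (X a) * T a) = X a * T a := by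
      intro a; rw [← mul_assoc, Real.mul_self_sqrt (hX0 a)]
    have e2 : ∀ a : Fin n → F, Real.sqrt (X a) ^ 2 = X a := fun a => Real.sq_sqrt (hX0 a)
    have e3 : ∀ a : Fin n → F, (Real.sqrt (X a) * T a) ^ 2 = X a * T a ^ 2 := by
      intro a; rw [mul_pow, e2]
    simp only [e1, e2, e3] at h
    rw [hX1, one_mul] at h
    rw [hDdef]
    exact h
  -- Step D: the character sum computation
  set C : ℝ := (Fintype.card F : ℝ) ^ n with hCdef
  have hC0 : 0 ≤ C := by positivity
  have hmulchi : ∀ a b b' : Fin n → F,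
      chiFun ψ' (∑ i, a i * b i) * chiFun ψ' (∑ i, a i * b' i)
        = chiFun ψ' (∑ i, a i * (b + b') i) := by
    intro a b b'
    rw [← chiFun_add]
    congr 1
    rw [← Finset.sum_add_distrib]
    exact Finset.sum_congr rfl (fun i _ => by simp [mul_add])
  have hTsum : ∑ a, T a ^ 2 = C * ∑ b, Y b ^ 2 := by
    have expand : ∀ a : Fin n → F, T a ^ 2 = ∑ b : Fin n → F, ∑ b' : Fin n → F,
        Y b * Y b' * chiFun ψ' (∑ i, a i * (b + b') i) := by
      intro a
      rw [sq, hTdef]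
      rw [Finset.sum_mul_sum]
      refine Finset.sum_congr rfl (fun b _ => Finset.sum_congr rfl (fun b' _ => ?_))
      rw [← hmulchi a b b']
      ring
    calc ∑ a, T a ^ 2
        = ∑ a : Fin n → F, ∑ b : Fin n → F, ∑ b' : Fin n → F,
            Y b * Y b' * chiFun ψ' (∑ i, a i * (b + b') i) :=
          Finset.sum_congr rfl (fun a _ => expand a)
      _ = ∑ b : Fin n → F, ∑ b' : Fin n → F, ∑ a : Fin n → F,
            Y b * Y b' * chiFun ψ' (∑ i, a i * (b + b') i) := by
          rw [Finset.sum_comm]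
          exact Finset.sum_congr rfl (fun b _ => Finset.sum_comm)
      _ = ∑ b : Fin n → F, ∑ b' : Fin n → F,
            Y b * Y b' * (if b + b' = 0 then C else 0) := by
          refine Finset.sum_congr rfl (fun b _ => Finset.sum_congr rfl (fun b' _ => ?_))
          rw [← Finset.mul_sum, sum_chiFun_dot ψ' hψ'ex (b + b'), hCdef]
      _ = ∑ b : Fin n → F, ∑ b' : Fin n → F,
            (if b' = b then Y b * Y b' * C else 0) := by
          refine Finset.sum_congr rfl (fun b _ => Finset.sum_congr rfl (fun b' _ => ?_))
          by_cases h : b + b' = 0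
          · rw [if_pos h, if_pos ((hvec b b').mp h)]
          · rw [if_neg h, if_neg (fun hh => h ((hvec b b').mpr hh)), mul_zero]
      _ = ∑ b : Fin n → F, Y b * Y b * C := by
          refine Finset.sum_congr rfl (fun b _ => ?_)
          rw [Finset.sum_ite_eq' Finset.univ b (fun b' => Y b * Y b' * C)]
          simp
      _ = C * ∑ b, Y b ^ 2 := by
          rw [Finset.mul_sum]
          exact Finset.sum_congr rfl (fun b _ => by ring)
  -- Step E
  have hYsq : ∑ b, Y b ^ 2 ≤ M := by
    calc ∑ b, Y b ^ 2 ≤ ∑ b, M * Y b := by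
          refine Finset.sum_le_sum (fun b _ => ?_)
          rw [sq]
          exact mul_le_mul_of_nonneg_right (hYk b) (hY0 b)
      _ = M := by rw [← Finset.mul_sum, hY1, mul_one]
  -- Step C and combine
  have hXT : ∑ a, X a * T a ^ 2 ≤ M * ∑ a, T a ^ 2 := by
    rw [Finset.mul_sum]
    exact Finset.sum_le_sum (fun a _ => mul_le_mul_of_nonneg_right (hXk a) (sq_nonneg _))
  have hDsq : D ^ 2 ≤ M * (C * M) := by
    calc D ^ 2 ≤ ∑ a, X a * T a ^ 2 := hCS
      _ ≤ M * ∑ a, T a ^ 2 := hXT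
      _ = M * (C * ∑ b, Y b ^ 2) := by rw [hTsum]
      _ ≤ M * (C * M) := by
          refine mul_le_mul_of_nonneg_left (mul_le_mul_of_nonneg_left hYsq hC0) hM0.le
  -- final real-power arithmetic
  set R : ℝ := (2 : ℝ) ^ (-(2 * δ - 1) * q * n / 2) with hRdef
  have hR0 : 0 < R := Real.rpow_pos_of_pos (by norm_num) _
  have hRsq : M * (C * M) = R ^ 2 := by
    have hCval : C = (2 : ℝ) ^ ((q * n : ℕ) : ℝ) := by
      rw [hCdef, hF, Real.rpow_natCast]
      push_cast
      rw [← pow_mul]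
    rw [hCval, hMdef, hRdef, sq, ← Real.rpow_add (by norm_num), ← Real.rpow_add (by norm_num),
      ← Real.rpow_add (by norm_num)]
    congr 1
    push_cast
    ring
  have hDabs : |D| ≤ R := by
    have h1 : D ^ 2 ≤ R ^ 2 := hRsq ▸ hDsq
    have h2 := Real.sqrt_le_sqrt h1
    rwa [Real.sqrt_sq_eq_abs, Real.sqrt_sq hR0.le] at h2
  rw [hstep]
  have h3 : (1 / 2 - D / 2 - 1 / 2 : ℝ) = -(D / 2) := by ring
  rw [h3, abs_neg, abs_div]
  have h4 : |(2 : ℝ)| = 2 := by norm_num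
  rw [h4]
  have := abs_nonneg D
  linarith
end

section
/- Let q ≥ 1 and let Z be a random variable on F_2^q (the set of q-bit strings). Then Σ_{z ∈ F_2^q} |Pr[Z = z] − 2^{−q}| ≤ 2^q · Σ_{S ∈ F_2^q, S ≠ 0} Σ_{b ∈ {0,1}} |Pr[S·Z = b] − 1/2|, where S·Z = Σ_{i=1}^q S_i Z_i (mod 2) is the inner product over F_2. -/
/-!
Walsh–Fourier inversion on `𝔽₂ⁿ`: with `bias P S = 𝔼[(-1)^(S·Z)]`, the characters
`z ↦ (-1)^(S·z)` are orthogonal, so `2ⁿ P z = Σ_S (-1)^(S·z) bias P S`. The term `S = 0` is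
`bias P 0 = 1`, hence `|P z - 2⁻ⁿ| ≤ 2⁻ⁿ Σ_{S ≠ 0} |bias P S|`, and summing over the `2ⁿ`
points `z` gives `Σ_z |P z - 2⁻ⁿ| ≤ Σ_{S ≠ 0} |bias P S|`. Finally
`bias P S = Pr[S·Z = 0] - Pr[S·Z = 1]`, and since the two probabilities add up to `1`,
`|bias P S| = Σ_b |Pr[S·Z = b] - 1/2|`.
-/

open Finset

def bitSign (b : ZMod 2) : ℝ := if b = 0 then 1 else -1

theorem bitSign_zero : bitSign 0 = 1 := if_pos rfl

theorem bitSign_of_ne_zero {b : ZMod 2} (hb : b ≠ 0) : bitSign b = -1 := if_neg hb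

theorem bitSign_add (a b : ZMod 2) : bitSign (a + b) = bitSign a * bitSign b := by
  have h : a + b = 0 ↔ (a = 0 ↔ b = 0) := by revert a b; decide
  unfold bitSign
  split_ifs <;> simp_all

theorem abs_bitSign (b : ZMod 2) : |bitSign b| = 1 := by
  unfold bitSign; split_ifs <;> norm_num

theorem ZMod.sum_univ_two {M : Type*} [AddCommMonoid M] (f : ZMod 2 → M) :
    ∑ b, f b = f 0 + f 1 :=
  Fin.sum_univ_two f

section Walsh

variable {ι : Type*} [Fintype ι] [DecidableEq ι]

theorem sum_bitSign_dotProduct (S : ι → ZMod 2) :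
    ∑ z, bitSign (S ⬝ᵥ z) = if S = 0 then (2 : ℝ) ^ Fintype.card ι else 0 := by
  split_ifs with hS
  · simp [hS, bitSign_zero, Fintype.card_pi]
  obtain ⟨i, hi⟩ := Function.ne_iff.mp hS
  have hflip : ∀ z, bitSign (S ⬝ᵥ (z + Pi.single i 1)) = -bitSign (S ⬝ᵥ z) := fun z => by
    rw [dotProduct_add, bitSign_add, dotProduct_single, mul_one, bitSign_of_ne_zero hi, mul_neg_one]
  have hsum :=
    Equiv.sum_comp (Equiv.addRight (Pi.single i 1 : ι → ZMod 2)) fun z => bitSign (S ⬝ᵥ z)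
  simp only [Equiv.coe_addRight, hflip, sum_neg_distrib] at hsum
  linarith

def bias (P : (ι → ZMod 2) → ℝ) (S : ι → ZMod 2) : ℝ := ∑ z, bitSign (S ⬝ᵥ z) * P z

theorem bias_zero {P : (ι → ZMod 2) → ℝ} (hP : ∑ z, P z = 1) : bias P 0 = 1 := by
  simp [bias, bitSign_zero, hP]

theorem sum_bitSign_mul_bias (P : (ι → ZMod 2) → ℝ) (z : ι → ZMod 2) :
    ∑ S, bitSign (S ⬝ᵥ z) * bias P S = 2 ^ Fintype.card ι * P z := by
  have hadd_eq_zero : ∀ w : ι → ZMod 2, z + w = 0 ↔ w = z := fun w => by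
    rw [add_eq_zero_iff_eq_neg', show -z = z from funext fun i => ZMod.neg_eq_self_mod_two _]
  calc ∑ S, bitSign (S ⬝ᵥ z) * bias P S
      = ∑ w, (∑ S, bitSign ((z + w) ⬝ᵥ S)) * P w := by
        simp only [bias, mul_sum, sum_mul, ← mul_assoc, ← bitSign_add, ← dotProduct_add,
          dotProduct_comm _ (z + _)]
        exact sum_comm
    _ = ∑ w, if w = z then 2 ^ Fintype.card ι * P w else 0 := by
        simp only [sum_bitSign_dotProduct, hadd_eq_zero, ite_mul, zero_mul]
    _ = 2 ^ Fintype.card ι * P z := by simp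

theorem sub_inv_eq_sum_bias {P : (ι → ZMod 2) → ℝ} (hP : ∑ z, P z = 1) (z : ι → ZMod 2) :
    P z - ((2 : ℝ) ^ Fintype.card ι)⁻¹ =
      ((2 : ℝ) ^ Fintype.card ι)⁻¹ * ∑ S ∈ univ.filter (· ≠ 0), bitSign (S ⬝ᵥ z) * bias P S := by
  have hsplit := add_sum_erase univ (fun S => bitSign (S ⬝ᵥ z) * bias P S) (mem_univ 0)
  rw [sum_bitSign_mul_bias, zero_dotProduct, bitSign_zero, bias_zero hP, one_mul] at hsplit
  rw [filter_ne', eq_sub_of_add_eq' hsplit]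
  field_simp

theorem abs_sub_inv_le_sum_abs_bias {P : (ι → ZMod 2) → ℝ} (hP : ∑ z, P z = 1)
    (z : ι → ZMod 2) :
    |P z - ((2 : ℝ) ^ Fintype.card ι)⁻¹| ≤
      ((2 : ℝ) ^ Fintype.card ι)⁻¹ * ∑ S ∈ univ.filter (· ≠ 0), |bias P S| := by
  rw [sub_inv_eq_sum_bias hP, abs_mul, abs_of_pos (by positivity)]
  gcongr
  refine (abs_sum_le_sum_abs _ _).trans_eq (sum_congr rfl fun S _ => ?_)
  rw [abs_mul, abs_bitSign, one_mul]

theorem sum_abs_sub_inv_le_sum_abs_bias {P : (ι → ZMod 2) → ℝ} (hP : ∑ z, P z = 1) :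
    ∑ z, |P z - ((2 : ℝ) ^ Fintype.card ι)⁻¹| ≤ ∑ S ∈ univ.filter (· ≠ 0), |bias P S| := by
  calc ∑ z, |P z - ((2 : ℝ) ^ Fintype.card ι)⁻¹|
      ≤ ∑ _z : ι → ZMod 2, ((2 : ℝ) ^ Fintype.card ι)⁻¹ * ∑ S ∈ univ.filter (· ≠ 0), |bias P S| :=
        sum_le_sum fun z _ => abs_sub_inv_le_sum_abs_bias hP z
    _ = ∑ S ∈ univ.filter (· ≠ 0), |bias P S| := by
        rw [sum_const, card_univ, Fintype.card_pi]
        simp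

theorem abs_bias_eq_sum {P : (ι → ZMod 2) → ℝ} (hP : ∑ z, P z = 1) (S : ι → ZMod 2) :
    |bias P S| = ∑ b : ZMod 2, |(∑ z ∈ univ.filter (fun z => S ⬝ᵥ z = b), P z) - 1 / 2| := by
  set p : ZMod 2 → ℝ := fun b => ∑ z ∈ univ.filter (fun z => S ⬝ᵥ z = b), P z
  have htotal : p 0 + p 1 = 1 := by
    rw [← hP, ← sum_fiberwise univ (S ⬝ᵥ ·) P, ZMod.sum_univ_two]
  have hfiber : ∀ b, ∑ z ∈ univ.filter (fun z => S ⬝ᵥ z = b), bitSign (S ⬝ᵥ z) * P z =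
      bitSign b * p b := fun b => by
    rw [mul_sum]
    exact sum_congr rfl fun z hz => by rw [(mem_filter.1 hz).2]
  have hbias : bias P S = p 0 - p 1 := by
    rw [bias, ← sum_fiberwise univ (S ⬝ᵥ ·), ZMod.sum_univ_two, hfiber, hfiber, bitSign_zero,
      bitSign_of_ne_zero one_ne_zero]
    ring
  have hp1 : p 1 - 1 / 2 = -(p 0 - 1 / 2) := by linarith
  show |bias P S| = ∑ b, |p b - 1 / 2|
  rw [ZMod.sum_univ_two, hbias, hp1, abs_neg, show p 0 - p 1 = 2 * (p 0 - 1 / 2) by linarith,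
    abs_mul, abs_two, two_mul]

end Walsh

theorem stmt_6_general (q : ℕ)
    (P : (Fin q → ZMod 2) → ℝ) (hP1 : ∑ z, P z = 1) :
    ∑ z : Fin q → ZMod 2, |P z - ((2 : ℝ) ^ q)⁻¹|
      ≤ (2 : ℝ) ^ q *
        ∑ S ∈ Finset.univ.filter (fun S : Fin q → ZMod 2 => S ≠ 0),
          ∑ b : ZMod 2,
            |(∑ z ∈ Finset.univ.filter (fun z : Fin q → ZMod 2 => ∑ i, S i * z i = b), P z)
              - 1 / 2| := by
  calc ∑ z : Fin q → ZMod 2, |P z - ((2 : ℝ) ^ q)⁻¹|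
      ≤ ∑ S ∈ univ.filter (· ≠ 0), |bias P S| := by
        simpa only [Fintype.card_fin] using sum_abs_sub_inv_le_sum_abs_bias hP1
    _ = ∑ S ∈ univ.filter (· ≠ 0), ∑ b : ZMod 2,
          |(∑ z ∈ univ.filter (fun z => S ⬝ᵥ z = b), P z) - 1 / 2| :=
        sum_congr rfl fun S _ => abs_bias_eq_sum hP1 S
    _ ≤ _ := le_mul_of_one_le_left (by positivity) (one_le_pow₀ one_le_two)

/-- Let `q ≥ 1` and let `Z` be a random variable on `𝔽₂^q` (the set of `q`-bit
strings), given by its distribution `P`. Then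
`Σ_z |Pr[Z = z] − 2^{−q}| ≤ 2^q · Σ_{S ≠ 0} Σ_{b ∈ 𝔽₂} |Pr[S·Z = b] − 1/2|`,
where `S·Z = Σᵢ Sᵢ Zᵢ` is the inner product over `𝔽₂`. -/
theorem stmt_6 (q : ℕ) (hq : 1 ≤ q)
    (P : (Fin q → ZMod 2) → ℝ) (hP0 : ∀ z, 0 ≤ P z) (hP1 : ∑ z, P z = 1) :
    ∑ z : Fin q → ZMod 2, |P z - ((2 : ℝ) ^ q)⁻¹|
      ≤ (2 : ℝ) ^ q *
        ∑ S ∈ Finset.univ.filter (fun S : Fin q → ZMod 2 => S ≠ 0),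
          ∑ b : ZMod 2,
            |(∑ z ∈ Finset.univ.filter (fun z : Fin q → ZMod 2 => ∑ i, S i * z i = b), P z)
              - 1 / 2| :=
  stmt_6_general q P hP1
end

section
/- Let k, n ≥ 1, let q_1,…,q_k ≥ 1, and let 1/2 < δ ≤ 1. Let X = (X^{(1)},…,X^{(k)}) and Y = (Y^{(1)},…,Y^{(k)}) be independent random variables, where X^{(ℓ)}, Y^{(ℓ)} take values in (F_{2^{q_ℓ}})^n, and suppose both X and Y satisfy the forward block condition: for every ℓ ∈ {1,…,k}, every assignment w of the first ℓ−1 blocks, and every value v ∈ (F_{2^{q_ℓ}})^n, Pr[X^{(ℓ)} = v and (X^{(1)},…,X^{(ℓ−1)}) = w] ≤ 2^{−δ q_ℓ n} · Pr[(X^{(1)},…,X^{(ℓ−1)}) = w], and likewise for Y. Let Z^{(ℓ)} = Ext_IP^{n,q_ℓ}(X^{(ℓ)}, Y^{(ℓ)}). Then the distribution of (Z^{(1)},…,Z^{(k)}) is within statistical distance Σ_{ℓ=1}^k 2^{2 q_ℓ} · 2^{−(2δ−1) q_ℓ n / 2} of the uniform distribution on F_{2^{q_1}} × ⋯ × F_{2^{q_k}}.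 -/
/-!
Hybrid argument. In the `m`-th hybrid the first `m` blocks carry the extractor outputs and the
remaining ones are independent uniform noise, so the `k`-th hybrid is the law of `Z` and the
`0`-th is uniform, and the distance is at most the sum of the distances between consecutive
hybrids. Hybrids `ℓ` and `ℓ + 1` differ only in block `ℓ`; conditioning on the first `ℓ` blocks
of `X` and `Y`, the forward block condition says that block `ℓ` is a pair of independent
sources on `Fⁿ` each of whose values has conditional probability at most `β = 2^{-δqn}`, and the
step reduces to the one-block inner-product extractor.

For that we expand the indicator of `⟨v, v'⟩ = ζ` in additive characters of `F`, which are
real-valued since `F` has characteristic `2`. By Lindsey's lemma every nontrivial coefficient is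
at most `|F|^{n/2} ‖P‖₂ ‖P'‖₂ ≤ |F|^{n/2} β`, which gives the distance
`½ |F|^{1 + n/2} β = ½ 2^q 2^{-(2δ-1)qn/2}` per block.
-/

open Finset

namespace InnerProductExtractor

section Character

lemma abs_addChar_apply {G : Type*} [AddGroup G] [Fintype G] (ψ : AddChar G ℝ) (x : G) :
    |ψ x| = 1 := by
  have h : |ψ x| ^ Fintype.card G = 1 := by
    rw [pow_abs, ← AddChar.map_nsmul_eq_pow, card_nsmul_eq_zero, AddChar.map_zero_eq_one, abs_one]
  exact (pow_eq_one_iff_of_nonneg (abs_nonneg _) Fintype.card_ne_zero).mp h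

variable {F : Type*} [Field F] [Fintype F]

lemma exists_addChar_real_ne_one (hF : ringChar F = 2) : ∃ ψ : AddChar F ℝ, ψ ≠ 1 := by
  have : CharP F 2 := ringChar.of_eq hF
  let _ : Algebra (ZMod 2) F := ZMod.algebra F 2
  obtain ⟨φ, hφ⟩ : ∃ φ : Module.Dual (ZMod 2) F, φ 1 ≠ 0 := by
    by_contra! h
    exact one_ne_zero ((Module.forall_dual_apply_eq_zero_iff (ZMod 2) (1 : F)).mp h)
  let χ : AddChar (ZMod 2) ℝ := AddChar.zmodChar 2 (ζ := (-1 : ℝ)) (by norm_num)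
  refine ⟨χ.compAddMonoidHom φ.toAddMonoidHom, fun h => ?_⟩
  have h1 := DFunLike.congr_fun h 1
  have hφ1 : φ 1 = 1 := by
    revert hφ; generalize φ 1 = t; revert t; decide
  simp only [AddChar.compAddMonoidHom_apply, LinearMap.toAddMonoidHom_coe, hφ1, χ,
    AddChar.zmodChar_apply, AddChar.one_apply] at h1
  norm_num [show (1 : ZMod 2).val = 1 from rfl] at h1

lemma addChar_map_sum_eq_prod {G M ι : Type*} [AddCommMonoid G] [CommMonoid M] (ψ : AddChar G M)
    (s : Finset ι) (f : ι → G) : ψ (∑ i ∈ s, f i) = ∏ i ∈ s, ψ (f i) :=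
  map_prod ψ.toMonoidHom (fun i => Multiplicative.ofAdd (f i)) s

variable [DecidableEq F] {ι : Type*} [Fintype ι] [DecidableEq ι] {ψ : AddChar F ℝ}

lemma sum_addChar_mul_dotProduct (hψ : ψ.IsPrimitive) {a : F} (ha : a ≠ 0) (d : ι → F) :
    ∑ v : ι → F, ψ (a * v ⬝ᵥ d) = if d = 0 then (Fintype.card F : ℝ) ^ Fintype.card ι else 0 := by
  have hprod : ∀ v : ι → F, ψ (a * v ⬝ᵥ d) = ∏ i, ψ (v i * (a * d i)) := by
    intro v
    rw [dotProduct, mul_sum, addChar_map_sum_eq_prod]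
    exact prod_congr rfl fun i _ => by ring_nf
  simp_rw [hprod]
  rw [← Fintype.prod_sum (fun i t => ψ (t * (a * d i)))]
  simp_rw [AddChar.sum_mulShift _ hψ, mul_eq_zero, ha, false_or]
  push_cast
  rw [Fintype.prod_ite_zero, prod_const, card_univ]
  exact if_congr funext_iff.symm rfl rfl

lemma ite_sub_inv_card_eq_sum_addChar (hψ : ψ.IsPrimitive) (u ζ : F) :
    (if u = ζ then (1 : ℝ) else 0) - (Fintype.card F : ℝ)⁻¹
      = (Fintype.card F : ℝ)⁻¹ * ∑ a ∈ univ.erase 0, ψ (a * (u - ζ)) := by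
  have hQ : (Fintype.card F : ℝ) ≠ 0 := Nat.cast_ne_zero.mpr Fintype.card_ne_zero
  have hsum := AddChar.sum_mulShift (u - ζ) hψ
  rw [← add_sum_erase _ _ (mem_univ 0), zero_mul, AddChar.map_zero_eq_one] at hsum
  simp only [sub_eq_zero] at hsum
  rw [eq_sub_of_add_eq' hsum]
  split_ifs
  · field_simp
  · field_simp; ring

lemma sum_mul_comp_neg_le_sum_sq {G : Type*} [AddGroup G] [Fintype G] (g : G → ℝ) :
    ∑ v, g v * g (-v) ≤ ∑ v, g v ^ 2 := by
  have hneg : ∑ v, g (-v) ^ 2 = ∑ v, g v ^ 2 := Equiv.sum_comp (Equiv.neg G) (fun v => g v ^ 2)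
  have hAMGM : ∀ v, 2 * (g v * g (-v)) ≤ g v ^ 2 + g (-v) ^ 2 := fun v => by
    rw [← mul_assoc]; exact two_mul_le_add_sq _ _
  have := sum_le_sum fun v (_ : v ∈ univ) => hAMGM v
  rw [← mul_sum, sum_add_distrib, hneg] at this
  linarith

/-- Lindsey's lemma. -/
theorem sq_sum_mul_addChar_dotProduct_le (hψ : ψ.IsPrimitive) {a : F} (ha : a ≠ 0)
    (f g : (ι → F) → ℝ) :
    (∑ v, ∑ v', f v * g v' * ψ (a * v ⬝ᵥ v')) ^ 2
      ≤ (Fintype.card F : ℝ) ^ Fintype.card ι * (∑ v, f v ^ 2) * ∑ v, g v ^ 2 := by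
  set T : (ι → F) → ℝ := fun v => ∑ v', g v' * ψ (a * v ⬝ᵥ v')
  have hS : ∑ v, ∑ v', f v * g v' * ψ (a * v ⬝ᵥ v') = ∑ v, f v * T v := by
    simp_rw [T, mul_sum, mul_assoc]
  have hT : ∑ v, T v ^ 2
      = (Fintype.card F : ℝ) ^ Fintype.card ι * ∑ v', g v' * g (-v') := by
    calc ∑ v, T v ^ 2
        = ∑ v', ∑ v'', g v' * g v'' * ∑ v, ψ (a * v ⬝ᵥ (v' + v'')) := by
          simp_rw [T, sq, sum_mul_sum, mul_sum]
          rw [sum_comm]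
          refine sum_congr rfl fun v' _ => ?_
          rw [sum_comm]
          refine sum_congr rfl fun v'' _ => sum_congr rfl fun v _ => ?_
          rw [dotProduct_add, mul_add, AddChar.map_add_eq_mul]
          ring
      _ = _ := by
          simp_rw [sum_addChar_mul_dotProduct hψ ha, add_eq_zero_iff_neg_eq, mul_ite, mul_zero,
            sum_ite_eq, mem_univ, if_true, mul_sum]
          exact sum_congr rfl fun v' _ => by ring
  calc (∑ v, ∑ v', f v * g v' * ψ (a * v ⬝ᵥ v')) ^ 2
      ≤ (∑ v, f v ^ 2) * ∑ v, T v ^ 2 := hS ▸ sum_mul_sq_le_sq_mul_sq univ f T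
    _ ≤ (∑ v, f v ^ 2) * ((Fintype.card F : ℝ) ^ Fintype.card ι * ∑ v, g v ^ 2) := by
      rw [hT]
      have := sum_mul_comp_neg_le_sum_sq g
      gcongr
    _ = _ := by ring

theorem sum_abs_sum_ite_dotProduct_sub_le (hF : ringChar F = 2) (f g : (ι → F) → ℝ) :
    ∑ ζ : F, |∑ v, ∑ v', f v * g v' *
        ((if v ⬝ᵥ v' = ζ then (1 : ℝ) else 0) - (Fintype.card F : ℝ)⁻¹)|
      ≤ (Fintype.card F : ℝ) *
          √((Fintype.card F : ℝ) ^ Fintype.card ι * (∑ v, f v ^ 2) * ∑ v, g v ^ 2) := by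
  obtain ⟨ψ, hψ⟩ := exists_addChar_real_ne_one hF
  replace hψ := AddChar.IsPrimitive.of_ne_one hψ
  set Q : ℝ := (Fintype.card F : ℝ) with hQ_def
  set B := √(Q ^ Fintype.card ι * (∑ v, f v ^ 2) * ∑ v, g v ^ 2)
  have hQ : 0 < Q := Nat.cast_pos.mpr Fintype.card_pos
  set S : F → ℝ := fun a => ∑ v, ∑ v', f v * g v' * ψ (a * v ⬝ᵥ v')
  have hS : ∀ a ≠ 0, |S a| ≤ B := fun a ha =>
    Real.abs_le_sqrt (sq_sum_mul_addChar_dotProduct_le hψ ha f g)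
  suffices hζ : ∀ ζ, |∑ v, ∑ v', f v * g v' * ((if v ⬝ᵥ v' = ζ then (1 : ℝ) else 0) - Q⁻¹)| ≤ B by
    calc _ ≤ ∑ _ζ : F, B := sum_le_sum fun ζ _ => hζ ζ
      _ = Q * B := by rw [sum_const, card_univ, nsmul_eq_mul]
  intro ζ
  -- Fourier expansion of the indicator of `v ⬝ᵥ v' = ζ`
  have hexpand : ∑ v, ∑ v', f v * g v' * ((if v ⬝ᵥ v' = ζ then (1 : ℝ) else 0) - Q⁻¹)
      = Q⁻¹ * ∑ a ∈ univ.erase (0 : F), ψ (-(a * ζ)) * S a := by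
    simp_rw [hQ_def, ite_sub_inv_card_eq_sum_addChar hψ, ← hQ_def, S, mul_sum]
    symm
    rw [sum_comm]
    refine sum_congr rfl fun v _ => ?_
    rw [sum_comm]
    refine sum_congr rfl fun v' _ => sum_congr rfl fun a _ => ?_
    rw [mul_sub, sub_eq_add_neg, AddChar.map_add_eq_mul]
    ring
  calc _ = Q⁻¹ * |∑ a ∈ univ.erase (0 : F), ψ (-(a * ζ)) * S a| := by
        rw [hexpand, abs_mul, abs_of_pos (inv_pos.mpr hQ)]
    _ ≤ Q⁻¹ * ∑ _a ∈ univ.erase (0 : F), B := by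
        gcongr
        refine (abs_sum_le_sum_abs _ _).trans (sum_le_sum fun a ha => ?_)
        rw [abs_mul, abs_addChar_apply, one_mul]
        exact hS a (ne_of_mem_erase ha)
    _ ≤ Q⁻¹ * (Q * B) := by
        rw [sum_const, nsmul_eq_mul]
        gcongr
        rw [hQ_def]
        exact_mod_cast card_erase_le.trans_eq card_univ
    _ = B := by field_simp

end Character

section Marginal

variable {α β γ : Type*} [Fintype α] [DecidableEq β]

def marginal (g : α → β) (P : α → ℝ) (b : β) : ℝ := ∑ a with g a = b, P a

lemma marginal_nonneg {P : α → ℝ} (hP : ∀ a, 0 ≤ P a) (g : α → β) (b : β) :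
    0 ≤ marginal g P b :=
  sum_nonneg fun a _ => hP a

lemma sum_marginal [Fintype β] (g : α → β) (P : α → ℝ) : ∑ b, marginal g P b = ∑ a, P a :=
  sum_fiberwise univ g P

lemma sum_marginal_pair [Fintype γ] [DecidableEq γ] (g : α → β) (h : α → γ) (P : α → ℝ)
    (b : β) : ∑ c, marginal (fun a => (g a, h a)) P (b, c) = marginal g P b := by
  simp only [marginal, Prod.mk.injEq, ← filter_filter]
  exact sum_fiberwise _ h P

lemma sum_mul_comp_eq_sum_marginal_mul [Fintype β] (g : α → β) (P : α → ℝ) (A : β → ℝ) :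
    ∑ a, P a * A (g a) = ∑ b, marginal g P b * A b := by
  rw [← sum_fiberwise univ g]
  refine sum_congr rfl fun b _ => ?_
  rw [marginal, sum_mul]
  exact sum_congr rfl fun a ha => by rw [(mem_filter.mp ha).2]

lemma sum_sum_mul_comp_eq_sum_marginal_mul [Fintype β] (g : α → β) (P P' : α → ℝ)
    (A : β → β → ℝ) :
    ∑ x, ∑ y, P x * P' y * A (g x) (g y)
      = ∑ b, ∑ b', marginal g P b * marginal g P' b' * A b b' := by
  simp_rw [mul_assoc, ← mul_sum, sum_mul_comp_eq_sum_marginal_mul g P',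
    sum_mul_comp_eq_sum_marginal_mul g P (fun b => ∑ b', marginal g P' b' * A b b')]

end Marginal

lemma sum_sq_le_mul_sq_of_le {ι : Type*} [Fintype ι] {f : ι → ℝ} {β p : ℝ}
    (hf : ∀ i, 0 ≤ f i) (hp : ∑ i, f i = p) (hβ : ∀ i, f i ≤ β * p) :
    ∑ i, f i ^ 2 ≤ β * p ^ 2 := by
  calc ∑ i, f i ^ 2 ≤ ∑ i, f i * (β * p) := sum_le_sum fun i _ => by
        rw [sq]; exact mul_le_mul_of_nonneg_left (hβ i) (hf i)
    _ = β * p ^ 2 := by rw [← sum_mul, hp]; ring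

lemma sum_prod_erase_mul_apply {ι : Type*} [Fintype ι] [DecidableEq ι] {α : ι → Type*}
    [∀ i, Fintype (α i)] (g : ∀ i, α i → ℝ) (i₀ : ι) (f : α i₀ → ℝ)
    (hg : ∀ i ≠ i₀, ∑ t, g i t = 1) :
    ∑ z : ∀ i, α i, (∏ i ∈ univ.erase i₀, g i (z i)) * f (z i₀) = ∑ t, f t := by
  have hsplit : ∀ z : ∀ i, α i, ∏ i, Function.update g i₀ f i (z i)
      = (∏ i ∈ univ.erase i₀, g i (z i)) * f (z i₀) := fun z => by
    rw [← mul_prod_erase _ _ (mem_univ i₀), Function.update_self, mul_comm]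
    congr 1
    exact prod_congr rfl fun i hi => by rw [Function.update_of_ne (ne_of_mem_erase hi)]
  simp_rw [← hsplit, ← Fintype.prod_sum, ← mul_prod_erase _ _ (mem_univ i₀),
    Function.update_self]
  rw [prod_congr rfl fun i hi => by
      rw [Function.update_of_ne (ne_of_mem_erase hi), hg i (ne_of_mem_erase hi)],
    prod_const_one, mul_one]

lemma sum_abs_sub_le_sum_range {Z : Type*} [Fintype Z] (H : ℕ → Z → ℝ) (k : ℕ) :
    ∑ z, |H k z - H 0 z| ≤ ∑ m ∈ range k, ∑ z, |H (m + 1) z - H m z| := by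
  rw [sum_comm]
  gcongr with z
  rw [← sum_range_sub (fun m => H m z)]
  exact abs_sum_le_sum_abs _ _

section Hybrid

variable {k n : ℕ} {Fq : Fin k → Type*} [∀ j, Field (Fq j)] [∀ j, Fintype (Fq j)]
  [∀ j, DecidableEq (Fq j)]

noncomputable def hybridFactor (m : ℕ) (j : Fin k) (u t : Fq j) : ℝ :=
  if (j : ℕ) < m then (if u = t then 1 else 0) else (Fintype.card (Fq j) : ℝ)⁻¹

noncomputable def hybrid (PX PY : (∀ j, Fin n → Fq j) → ℝ) (m : ℕ) (z : ∀ j, Fq j) : ℝ :=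
  ∑ x, ∑ y, PX x * PY y * ∏ j, hybridFactor m j (x j ⬝ᵥ y j) (z j)

variable {PX PY : (∀ j, Fin n → Fq j) → ℝ}

lemma hybridFactor_nonneg (m : ℕ) (j : Fin k) (u t : Fq j) : 0 ≤ hybridFactor m j u t := by
  unfold hybridFactor; split_ifs <;> positivity

lemma sum_hybridFactor (m : ℕ) (j : Fin k) (u : Fq j) : ∑ t, hybridFactor m j u t = 1 := by
  unfold hybridFactor
  split_ifs
  · rw [sum_ite_eq, if_pos (mem_univ u)]
  · rw [sum_const, card_univ, nsmul_eq_mul, mul_inv_cancel₀]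
    exact Nat.cast_ne_zero.mpr Fintype.card_ne_zero

lemma hybrid_zero (hPX : ∑ x, PX x = 1) (hPY : ∑ y, PY y = 1) (z : ∀ j, Fq j) :
    hybrid PX PY 0 z = ∏ j, (Fintype.card (Fq j) : ℝ)⁻¹ := by
  simp only [hybrid, hybridFactor, Nat.not_lt_zero, if_false, ← sum_mul, ← mul_sum, hPX, hPY,
    mul_one, one_mul]

lemma hybrid_last (z : ∀ j, Fq j) :
    hybrid PX PY k z
      = ∑ x, ∑ y, PX x * PY y * if ∀ j, x j ⬝ᵥ y j = z j then (1 : ℝ) else 0 := by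
  simp only [hybrid, hybridFactor, Fin.is_lt, if_true, Fintype.prod_boole]
  congr!

omit [∀ j, Field (Fq j)] in
lemma prod_hybridFactor_succ_sub (ℓ : Fin k) (u z : ∀ j, Fq j) :
    ∏ j, hybridFactor (ℓ + 1) j (u j) (z j) - ∏ j, hybridFactor ℓ j (u j) (z j)
      = (∏ j ∈ univ.erase ℓ, hybridFactor ℓ j (u j) (z j))
          * ((if u ℓ = z ℓ then (1 : ℝ) else 0) - (Fintype.card (Fq ℓ) : ℝ)⁻¹) := by
  have hsame : ∀ j ∈ univ.erase ℓ,
      hybridFactor (ℓ + 1) j (u j) (z j) = hybridFactor ℓ j (u j) (z j) := fun j hj => by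
    have : (j : ℕ) ≠ ℓ := Fin.val_ne_of_ne (ne_of_mem_erase hj)
    simp only [hybridFactor, show (j : ℕ) < ℓ + 1 ↔ (j : ℕ) < ℓ by omega]
  rw [← mul_prod_erase _ _ (mem_univ ℓ), ← mul_prod_erase _ _ (mem_univ ℓ), prod_congr rfl hsame]
  simp only [hybridFactor, Nat.lt_succ_self, lt_irrefl, if_true, if_false]
  ring

-- `truncate ℓ x` encodes the prefix `(x₀, …, x_{ℓ-1})` as a point of the full block space.
def truncate (ℓ : Fin k) (x : ∀ j, Fin n → Fq j) : ∀ j, Fin n → Fq j :=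
  fun j => if j < ℓ then x j else 0

omit [∀ j, Fintype (Fq j)] [∀ j, DecidableEq (Fq j)] in
lemma truncate_eq_truncate_iff {ℓ : Fin k} {a w : ∀ j, Fin n → Fq j} :
    truncate ℓ a = truncate ℓ w ↔ ∀ j < ℓ, a j = w j := by
  refine ⟨fun h j hj => by simpa [truncate, hj] using congrFun h j, fun h => funext fun j => ?_⟩
  simp only [truncate]
  split_ifs with hj
  · exact h j hj
  · rfl

lemma hybridFactor_truncate (ℓ j : Fin k) (x y : ∀ j, Fin n → Fq j) (t : Fq j) :
    hybridFactor ℓ j (truncate ℓ x j ⬝ᵥ truncate ℓ y j) t = hybridFactor ℓ j (x j ⬝ᵥ y j) t := by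
  by_cases hj : (j : ℕ) < ℓ
  · simp only [truncate, if_pos (Fin.lt_def.mpr hj)]
  · simp only [hybridFactor, if_neg hj]

def ForwardBlockCondition (β : Fin k → ℝ) (P : (∀ j, Fin n → Fq j) → ℝ) : Prop :=
  ∀ (ℓ : Fin k) (w : ∀ j, Fin n → Fq j) (v : Fin n → Fq ℓ),
    (∑ a ∈ univ.filter (fun a : ∀ j, Fin n → Fq j => (∀ j < ℓ, a j = w j) ∧ a ℓ = v), P a)
      ≤ β ℓ * ∑ a ∈ univ.filter (fun a : ∀ j, Fin n → Fq j => ∀ j < ℓ, a j = w j), P a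

def prefixBlock (ℓ : Fin k) (a : ∀ j, Fin n → Fq j) : (∀ j, Fin n → Fq j) × (Fin n → Fq ℓ) :=
  (truncate ℓ a, a ℓ)

lemma ForwardBlockCondition.marginal_prefixBlock_le {β : Fin k → ℝ}
    {P : (∀ j, Fin n → Fq j) → ℝ} (hP : ForwardBlockCondition β P) (ℓ : Fin k)
    (w : ∀ j, Fin n → Fq j) (v : Fin n → Fq ℓ) :
    marginal (prefixBlock ℓ) P (w, v) ≤ β ℓ * marginal (truncate ℓ) P w := by
  by_cases hw : ∃ x, truncate ℓ x = w
  · obtain ⟨x, rfl⟩ := hw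
    simp only [marginal, prefixBlock, Prod.mk.injEq, truncate_eq_truncate_iff]
    exact hP ℓ x v
  · rw [not_exists] at hw
    simp [marginal, prefixBlock, hw]

noncomputable def blockBias (ℓ : Fin k) (PX PY : (∀ j, Fin n → Fq j) → ℝ)
    (w w' : ∀ j, Fin n → Fq j) (ζ : Fq ℓ) : ℝ :=
  ∑ v, ∑ v', marginal (prefixBlock ℓ) PX (w, v) * marginal (prefixBlock ℓ) PY (w', v') *
    ((if v ⬝ᵥ v' = ζ then (1 : ℝ) else 0) - (Fintype.card (Fq ℓ) : ℝ)⁻¹)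

lemma hybrid_succ_sub (ℓ : Fin k) (z : ∀ j, Fq j) :
    hybrid PX PY (ℓ + 1) z - hybrid PX PY ℓ z
      = ∑ w, ∑ w', (∏ j ∈ univ.erase ℓ, hybridFactor ℓ j (w j ⬝ᵥ w' j) (z j)) *
          blockBias ℓ PX PY w w' (z ℓ) := by
  set A : (∀ j, Fin n → Fq j) × (Fin n → Fq ℓ) → (∀ j, Fin n → Fq j) × (Fin n → Fq ℓ) → ℝ :=
    fun b b' => (∏ j ∈ univ.erase ℓ, hybridFactor ℓ j (b.1 j ⬝ᵥ b'.1 j) (z j)) *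
      ((if b.2 ⬝ᵥ b'.2 = z ℓ then (1 : ℝ) else 0) - (Fintype.card (Fq ℓ) : ℝ)⁻¹)
  calc _ = ∑ x, ∑ y, PX x * PY y * A (prefixBlock ℓ x) (prefixBlock ℓ y) := by
        simp only [hybrid, ← sum_sub_distrib, ← mul_sub, prod_hybridFactor_succ_sub, A,
          prefixBlock, hybridFactor_truncate]
    _ = ∑ b, ∑ b', marginal (prefixBlock ℓ) PX b * marginal (prefixBlock ℓ) PY b' * A b b' :=
        sum_sum_mul_comp_eq_sum_marginal_mul _ _ _ _
    _ = _ := by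
        simp only [Fintype.sum_prod_type, A, blockBias]
        refine sum_congr rfl fun w _ => ?_
        rw [sum_comm]
        refine sum_congr rfl fun w' _ => ?_
        rw [mul_sum]
        refine sum_congr rfl fun v _ => ?_
        rw [mul_sum]
        exact sum_congr rfl fun v' _ => by ring

variable {β : Fin k → ℝ}

lemma sum_abs_blockBias_le (hPX0 : ∀ x, 0 ≤ PX x) (hPY0 : ∀ y, 0 ≤ PY y)
    (hX : ForwardBlockCondition β PX) (hY : ForwardBlockCondition β PY) (ℓ : Fin k)
    (hchar : ringChar (Fq ℓ) = 2) (hβ : 0 ≤ β ℓ) (w w' : ∀ j, Fin n → Fq j) :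
    ∑ ζ, |blockBias ℓ PX PY w w' ζ|
      ≤ Fintype.card (Fq ℓ) * √((Fintype.card (Fq ℓ) : ℝ) ^ n) * β ℓ *
          (marginal (truncate ℓ) PX w * marginal (truncate ℓ) PY w') := by
  set Q : ℝ := (Fintype.card (Fq ℓ) : ℝ)
  set p := marginal (truncate ℓ) PX w
  set p' := marginal (truncate ℓ) PY w'
  have hp : 0 ≤ p := marginal_nonneg hPX0 _ _
  have hp' : 0 ≤ p' := marginal_nonneg hPY0 _ _
  have hf := sum_sq_le_mul_sq_of_le (f := fun v => marginal (prefixBlock ℓ) PX (w, v))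
    (fun v => marginal_nonneg hPX0 _ _) (sum_marginal_pair _ _ PX w)
    (hX.marginal_prefixBlock_le ℓ w)
  have hg := sum_sq_le_mul_sq_of_le (f := fun v => marginal (prefixBlock ℓ) PY (w', v))
    (fun v => marginal_nonneg hPY0 _ _) (sum_marginal_pair _ _ PY w')
    (hY.marginal_prefixBlock_le ℓ w')
  calc ∑ ζ, |blockBias ℓ PX PY w w' ζ|
      ≤ Q * √(Q ^ Fintype.card (Fin n) * (∑ v, marginal (prefixBlock ℓ) PX (w, v) ^ 2) *
          ∑ v, marginal (prefixBlock ℓ) PY (w', v) ^ 2) :=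
        sum_abs_sum_ite_dotProduct_sub_le hchar _ _
    _ ≤ Q * √(Q ^ n * (β ℓ * p ^ 2) * (β ℓ * p' ^ 2)) := by
        rw [Fintype.card_fin]
        gcongr
    _ = Q * √(Q ^ n) * β ℓ * (p * p') := by
        rw [show Q ^ n * (β ℓ * p ^ 2) * (β ℓ * p' ^ 2) = Q ^ n * (β ℓ * (p * p')) ^ 2 by ring,
          Real.sqrt_mul (by positivity), Real.sqrt_sq (by positivity)]
        ring

theorem sum_abs_hybrid_succ_sub_le (hPX0 : ∀ x, 0 ≤ PX x) (hPX1 : ∑ x, PX x = 1)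
    (hPY0 : ∀ y, 0 ≤ PY y) (hPY1 : ∑ y, PY y = 1)
    (hX : ForwardBlockCondition β PX) (hY : ForwardBlockCondition β PY) (ℓ : Fin k)
    (hchar : ringChar (Fq ℓ) = 2) (hβ : 0 ≤ β ℓ) :
    ∑ z, |hybrid PX PY (ℓ + 1) z - hybrid PX PY ℓ z|
      ≤ Fintype.card (Fq ℓ) * √((Fintype.card (Fq ℓ) : ℝ) ^ n) * β ℓ := by
  set C : ℝ := Fintype.card (Fq ℓ) * √((Fintype.card (Fq ℓ) : ℝ) ^ n) * β ℓ
  set G : (∀ j, Fin n → Fq j) → (∀ j, Fin n → Fq j) → (∀ j, Fq j) → ℝ :=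
    fun w w' z => ∏ j ∈ univ.erase ℓ, hybridFactor ℓ j (w j ⬝ᵥ w' j) (z j)
  set D := blockBias ℓ PX PY
  calc ∑ z, |hybrid PX PY (ℓ + 1) z - hybrid PX PY ℓ z|
      = ∑ z, |∑ w, ∑ w', G w w' z * D w w' (z ℓ)| := by simp_rw [hybrid_succ_sub]; rfl
    _ ≤ ∑ z, ∑ w, ∑ w', G w w' z * |D w w' (z ℓ)| := by
        gcongr with z
        refine (abs_sum_le_sum_abs _ _).trans (sum_le_sum fun w _ => ?_)
        refine (abs_sum_le_sum_abs _ _).trans (sum_le_sum fun w' _ => ?_)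
        rw [abs_mul, abs_of_nonneg (prod_nonneg fun j _ => hybridFactor_nonneg _ _ _ _)]
    _ = ∑ w, ∑ w', ∑ ζ, |D w w' ζ| := by
        rw [sum_comm]
        refine sum_congr rfl fun w _ => ?_
        rw [sum_comm]
        exact sum_congr rfl fun w' _ => sum_prod_erase_mul_apply
          (fun j t => hybridFactor ℓ j (w j ⬝ᵥ w' j) t) ℓ (fun ζ => |D w w' ζ|)
          fun j _ => sum_hybridFactor _ _ _
    _ ≤ ∑ w, ∑ w', C * (marginal (truncate ℓ) PX w * marginal (truncate ℓ) PY w') := by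
        gcongr with w _ w' _
        exact sum_abs_blockBias_le hPX0 hPY0 hX hY ℓ hchar hβ w w'
    _ = C * ((∑ w, marginal (truncate ℓ) PX w) * ∑ w', marginal (truncate ℓ) PY w') := by
        simp_rw [sum_mul_sum, mul_sum]
    _ = C := by rw [sum_marginal, sum_marginal, hPX1, hPY1, mul_one, mul_one]

end Hybrid

lemma half_mul_two_pow_le (q n : ℕ) (δ : ℝ) :
    1 / 2 * ((2 : ℝ) ^ q * √(((2 : ℝ) ^ q) ^ n) * (2 : ℝ) ^ (-(δ * q * n)))
      ≤ (2 : ℝ) ^ (2 * (q : ℝ)) * (2 : ℝ) ^ (-(2 * δ - 1) * q * n / 2) := by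
  have hE : √(((2 : ℝ) ^ q) ^ n) * (2 : ℝ) ^ (-(δ * q * n))
      = (2 : ℝ) ^ (-(2 * δ - 1) * q * n / 2) := by
    rw [← pow_mul, Real.sqrt_eq_rpow, ← Real.rpow_natCast, ← Real.rpow_mul zero_le_two,
      ← Real.rpow_add zero_lt_two]
    push_cast
    ring_nf
  have hq : (2 : ℝ) ^ q ≤ (2 : ℝ) ^ (2 * (q : ℝ)) := by
    rw [← Real.rpow_natCast]
    exact Real.rpow_le_rpow_of_exponent_le one_le_two (by linarith [q.cast_nonneg (α := ℝ)])
  rw [mul_assoc, hE, ← mul_assoc]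
  gcongr
  linarith [pow_pos (zero_lt_two (α := ℝ)) q]

end InnerProductExtractor

open InnerProductExtractor

theorem stmt_9_general (k n : ℕ)
    (qv : Fin k → ℕ) (hqv : ∀ ℓ, 1 ≤ qv ℓ)
    (δ : ℝ)
    (Fq : Fin k → Type*) [∀ ℓ, Field (Fq ℓ)] [∀ ℓ, Fintype (Fq ℓ)] [∀ ℓ, DecidableEq (Fq ℓ)]
    (hcard : ∀ ℓ, Fintype.card (Fq ℓ) = 2 ^ qv ℓ)
    (PX PY : (∀ ℓ, Fin n → Fq ℓ) → ℝ)
    (hPX0 : ∀ a, 0 ≤ PX a) (hPX1 : ∑ a, PX a = 1)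
    (hPY0 : ∀ a, 0 ≤ PY a) (hPY1 : ∑ a, PY a = 1)
    (hXblock : ∀ (ℓ : Fin k) (w : ∀ j, Fin n → Fq j) (v : Fin n → Fq ℓ),
      (∑ a ∈ Finset.univ.filter
          (fun a : ∀ j, Fin n → Fq j => (∀ j < ℓ, a j = w j) ∧ a ℓ = v), PX a)
        ≤ (2 : ℝ) ^ (-(δ * qv ℓ * n)) *
          ∑ a ∈ Finset.univ.filter (fun a : ∀ j, Fin n → Fq j => ∀ j < ℓ, a j = w j), PX a)
    (hYblock : ∀ (ℓ : Fin k) (w : ∀ j, Fin n → Fq j) (v : Fin n → Fq ℓ),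
      (∑ a ∈ Finset.univ.filter
          (fun a : ∀ j, Fin n → Fq j => (∀ j < ℓ, a j = w j) ∧ a ℓ = v), PY a)
        ≤ (2 : ℝ) ^ (-(δ * qv ℓ * n)) *
          ∑ a ∈ Finset.univ.filter (fun a : ∀ j, Fin n → Fq j => ∀ j < ℓ, a j = w j), PY a) :
    (1 / 2) * ∑ z : ∀ ℓ, Fq ℓ,
        |(∑ x : ∀ ℓ, Fin n → Fq ℓ, ∑ y : ∀ ℓ, Fin n → Fq ℓ,
            PX x * PY y * (if ∀ ℓ, (∑ i, x ℓ i * y ℓ i) = z ℓ then (1 : ℝ) else 0))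
          - (∏ ℓ, (2 : ℝ) ^ qv ℓ)⁻¹|
      ≤ ∑ ℓ, (2 : ℝ) ^ (2 * (qv ℓ : ℝ)) * (2 : ℝ) ^ (-(2 * δ - 1) * qv ℓ * n / 2) := by
  have hQ : ∀ ℓ, (Fintype.card (Fq ℓ) : ℝ) = 2 ^ qv ℓ := fun ℓ => by rw [hcard]; push_cast; rfl
  have hchar : ∀ ℓ, ringChar (Fq ℓ) = 2 := fun ℓ => FiniteField.even_card_iff_char_two.mpr <| by
    rw [hcard, Nat.pow_mod, Nat.mod_self, zero_pow (by have := hqv ℓ; omega), Nat.zero_mod]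
  calc _ = 1 / 2 * ∑ z, |hybrid PX PY k z - hybrid PX PY 0 z| := by
        simp only [hybrid_last, hybrid_zero hPX1 hPY1, hQ, prod_inv_distrib]
        rfl
    _ ≤ ∑ ℓ : Fin k, 1 / 2 * ∑ z, |hybrid PX PY (ℓ + 1) z - hybrid PX PY ℓ z| := by
        rw [← mul_sum, Fin.sum_univ_eq_sum_range
          (fun m => ∑ z, |hybrid PX PY (m + 1) z - hybrid PX PY m z|)]
        gcongr
        exact sum_abs_sub_le_sum_range _ _
    _ ≤ ∑ ℓ, 1 / 2 *
          ((2 : ℝ) ^ qv ℓ * √(((2 : ℝ) ^ qv ℓ) ^ n) * (2 : ℝ) ^ (-(δ * qv ℓ * n))) := by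
        gcongr with ℓ
        rw [← hQ]
        exact sum_abs_hybrid_succ_sub_le (β := fun ℓ => (2 : ℝ) ^ (-(δ * qv ℓ * n)))
          hPX0 hPX1 hPY0 hPY1 hXblock hYblock ℓ (hchar ℓ) (by positivity)
    _ ≤ _ := sum_le_sum fun ℓ _ => half_mul_two_pow_le _ _ _

/-- Online extractor with incremental block lengths (classical side
information). Let `k, n ≥ 1`, `q_ℓ ≥ 1`, `1/2 < δ ≤ 1`, and let `F_ℓ` be the finite field
with `2^{q_ℓ}` elements. Let `X = (X⁽¹⁾,…,X⁽ᵏ⁾)` and `Y = (Y⁽¹⁾,…,Y⁽ᵏ⁾)` be independent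
(the joint distribution being the product of the distributions `PX` and `PY`), with
`X⁽ℓ⁾, Y⁽ℓ⁾` valued in `F_ℓⁿ`, and suppose both satisfy the forward block condition with
rate `δ`: each block has conditional probability at most `2^{−δ q_ℓ n}` of any value, given
any assignment of the previous blocks. Let `Z⁽ℓ⁾ = Ext_IP(X⁽ℓ⁾, Y⁽ℓ⁾) = Σᵢ X⁽ℓ⁾ᵢ Y⁽ℓ⁾ᵢ`.
Then `(Z⁽¹⁾,…,Z⁽ᵏ⁾)` is within statistical distance `Σ_ℓ 2^{2q_ℓ} · 2^{−(2δ−1) q_ℓ n / 2}`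
of the uniform distribution on `F₁ × ⋯ × F_k`. -/
theorem stmt_9 (k n : ℕ) (hk : 1 ≤ k) (hn : 1 ≤ n)
    (qv : Fin k → ℕ) (hqv : ∀ ℓ, 1 ≤ qv ℓ)
    (δ : ℝ) (hδ : 1 / 2 < δ) (hδ1 : δ ≤ 1)
    (Fq : Fin k → Type*) [∀ ℓ, Field (Fq ℓ)] [∀ ℓ, Fintype (Fq ℓ)] [∀ ℓ, DecidableEq (Fq ℓ)]
    (hcard : ∀ ℓ, Fintype.card (Fq ℓ) = 2 ^ qv ℓ)
    (PX PY : (∀ ℓ, Fin n → Fq ℓ) → ℝ)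
    (hPX0 : ∀ a, 0 ≤ PX a) (hPX1 : ∑ a, PX a = 1)
    (hPY0 : ∀ a, 0 ≤ PY a) (hPY1 : ∑ a, PY a = 1)
    (hXblock : ∀ (ℓ : Fin k) (w : ∀ j, Fin n → Fq j) (v : Fin n → Fq ℓ),
      (∑ a ∈ Finset.univ.filter
          (fun a : ∀ j, Fin n → Fq j => (∀ j < ℓ, a j = w j) ∧ a ℓ = v), PX a)
        ≤ (2 : ℝ) ^ (-(δ * qv ℓ * n)) *
          ∑ a ∈ Finset.univ.filter (fun a : ∀ j, Fin n → Fq j => ∀ j < ℓ, a j = w j), PX a)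
    (hYblock : ∀ (ℓ : Fin k) (w : ∀ j, Fin n → Fq j) (v : Fin n → Fq ℓ),
      (∑ a ∈ Finset.univ.filter
          (fun a : ∀ j, Fin n → Fq j => (∀ j < ℓ, a j = w j) ∧ a ℓ = v), PY a)
        ≤ (2 : ℝ) ^ (-(δ * qv ℓ * n)) *
          ∑ a ∈ Finset.univ.filter (fun a : ∀ j, Fin n → Fq j => ∀ j < ℓ, a j = w j), PY a) :
    (1 / 2) * ∑ z : ∀ ℓ, Fq ℓ,
        |(∑ x : ∀ ℓ, Fin n → Fq ℓ, ∑ y : ∀ ℓ, Fin n → Fq ℓ,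
            PX x * PY y * (if ∀ ℓ, (∑ i, x ℓ i * y ℓ i) = z ℓ then (1 : ℝ) else 0))
          - (∏ ℓ, (2 : ℝ) ^ qv ℓ)⁻¹|
      ≤ ∑ ℓ, (2 : ℝ) ^ (2 * (qv ℓ : ℝ)) * (2 : ℝ) ^ (-(2 * δ - 1) * qv ℓ * n / 2) :=
  stmt_9_general k n qv hqv δ Fq hcard PX PY hPX0 hPX1 hPY0 hPY1 hXblock hYblock
end

section
/- Let k, n, q ≥ 1 and let 1/2 < δ ≤ 1. Let X = (X^{(1)},…,X^{(k)}) and Y = (Y^{(1)},…,Y^{(k)}) be independent random variables, where each X^{(ℓ)}, Y^{(ℓ)} takes values in (F_{2^q})^n, and suppose both X and Y satisfy the forward block condition: for every ℓ ∈ {1,…,k}, every assignment w of the first ℓ−1 blocks, and every value v ∈ (F_{2^q})^n, Pr[X^{(ℓ)} = v and (X^{(1)},…,X^{(ℓ−1)}) = w] ≤ 2^{−δ q n} · Pr[(X^{(1)},…,X^{(ℓ−1)}) = w], and likewise for Y. Let Z^{(ℓ)} = Ext_IP^{n,q}(X^{(ℓ)}, Y^{(ℓ)}). Then the distribution of (Z^{(1)},…,Z^{(k)})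 is within statistical distance k · 2^{2q} · 2^{−(2δ−1) q n / 2} of the uniform distribution on (F_{2^q})^k. -/
open Finset

namespace Stmt10Aux

/-- A real-valued additive character gadget for a finite field of characteristic 2. -/
structure GC (F : Type*) [Field F] [Fintype F] where
  e : F → ℝ
  e_zero : e 0 = 1
  e_add : ∀ x y : F, e (x + y) = e x * e y
  add_self : ∀ x : F, x + x = 0
  sum_mul_eq : ∀ t : F, t ≠ 0 → ∑ x : F, e (t * x) = 0

variable {F : Type*} [Field F] [Fintype F]

lemma gc_exists (q : ℕ) (hq : 1 ≤ q) (hF : Fintype.card F = 2 ^ q) : Nonempty (GC F) := by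
  classical
  have hz : ∀ a : ZMod 2, a = 0 ∨ a = 1 := by decide
  have hone : (1 : ZMod 2) + 1 = 0 := by decide
  have honez : (1 : ZMod 2) ≠ 0 := by decide
  have hchar : ringChar F = 2 := by
    obtain ⟨m, hp, hcard⟩ := FiniteField.card F (ringChar F)
    have hdvd : ringChar F ∣ 2 ^ q := by
      rw [← hF, hcard]; exact dvd_pow_self _ (by exact_mod_cast m.ne_zero)
    exact (Nat.prime_dvd_prime_iff_eq hp Nat.prime_two).mp (hp.dvd_of_dvd_pow hdvd)
  haveI : CharP F 2 := hchar ▸ ringChar.charP F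
  have h2F : (2 : F) = 0 := by exact_mod_cast CharP.cast_eq_zero F 2
  have hadd : ∀ x : F, x + x = 0 := fun x => by rw [← two_mul, h2F, zero_mul]
  haveI : Fact (Nat.Prime 2) := ⟨Nat.prime_two⟩
  letI : Algebra (ZMod 2) F := ZMod.algebra F 2
  let b := Module.Basis.ofVectorSpace (ZMod 2) F
  obtain ⟨i⟩ := b.index_nonempty
  let φ : F →ₗ[ZMod 2] ZMod 2 := b.coord i
  have hφ : φ (b i) = 1 := by
    simp [φ, Module.Basis.coord_apply]
  refine ⟨⟨fun x => if φ x = 0 then 1 else -1, ?_, ?_, hadd, ?_⟩⟩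
  · simp
  · intro x y
    have hxy : φ (x + y) = φ x + φ y := map_add φ x y
    rcases hz (φ x) with h1 | h1 <;> rcases hz (φ y) with h2 | h2 <;>
      simp [hxy, h1, h2, hone, honez]
  · intro t ht
    set s₀ := t⁻¹ * b i with hs₀
    have h1 : φ (t * s₀) = 1 := by
      rw [hs₀, mul_inv_cancel_left₀ ht]; exact hφ
    have key : ∀ x : F, (if φ (t * (x + s₀)) = 0 then (1 : ℝ) else -1)
        = -(if φ (t * x) = 0 then (1 : ℝ) else -1) := by
      intro x
      have hsum : φ (t * (x + s₀)) = φ (t * x) + 1 := by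
        rw [mul_add, map_add, h1]
      rcases hz (φ (t * x)) with h2 | h2 <;>
        simp [hsum, h2, hone, honez]
    have hb : ∑ x : F, (if φ (t * (x + s₀)) = 0 then (1 : ℝ) else -1)
        = ∑ x : F, (if φ (t * x) = 0 then (1 : ℝ) else -1) :=
      Fintype.sum_equiv (Equiv.addRight s₀) _ _ (fun x => rfl)
    simp only [key, Finset.sum_neg_distrib] at hb
    linarith [hb]

variable [DecidableEq F]

lemma GC.e_sq (g : GC F) (x : F) : g.e x * g.e x = 1 := by
  rw [← g.e_add, g.add_self, g.e_zero]

lemma GC.add_eq_zero (g : GC F) {a b : F} : a + b = 0 ↔ a = b := by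
  constructor
  · intro h
    have h2 := congrArg (· + b) h
    simp only [zero_add] at h2
    rwa [add_assoc, g.add_self, add_zero] at h2
  · rintro rfl; exact g.add_self a

lemma GC.orth (g : GC F) (w : F) :
    ∑ t : F, g.e (t * w) = if w = 0 then (Fintype.card F : ℝ) else 0 := by
  by_cases h : w = 0
  · simp [h, g.e_zero, Finset.card_univ]
  · rw [if_neg h, ← g.sum_mul_eq w h]
    exact Finset.sum_congr rfl fun t _ => by rw [mul_comm]

lemma GC.orth' (g : GC F) (t : F) :
    ∑ x : F, g.e (t * x) = if t = 0 then (Fintype.card F : ℝ) else 0 := by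
  by_cases h : t = 0
  · simp [h, g.e_zero, Finset.card_univ]
  · rw [if_neg h]; exact g.sum_mul_eq t h

lemma GC.e_sum (g : GC F) {ι : Type*} (s : Finset ι) (f : ι → F) :
    g.e (∑ i ∈ s, f i) = ∏ i ∈ s, g.e (f i) := by
  classical
  induction s using Finset.cons_induction with
  | empty => simpa using g.e_zero
  | cons a s ha ih => rw [Finset.sum_cons, Finset.prod_cons, g.e_add, ih]

lemma GC.vec_orth (g : GC F) (n : ℕ) (c : Fin n → F) :
    ∑ x : Fin n → F, g.e (∑ i, c i * x i)
      = if c = 0 then ((Fintype.card F : ℝ)) ^ n else 0 := by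
  have h1 : ∀ x : Fin n → F, g.e (∑ i, c i * x i) = ∏ i, g.e (c i * x i) :=
    fun x => g.e_sum _ _
  simp only [h1]
  rw [← Fintype.prod_sum (fun i ζ => g.e (c i * ζ))]
  simp_rw [g.orth']
  by_cases hc : c = 0
  · rw [if_pos hc]
    have : ∀ i, c i = 0 := fun i => congrFun hc i
    simp [this, Finset.card_univ]
  · rw [if_neg hc]
    obtain ⟨i0, hi0⟩ : ∃ i, c i ≠ 0 := by
      by_contra h; push_neg at h; exact hc (funext h)
    exact Finset.prod_eq_zero (Finset.mem_univ i0) (by simp [hi0])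

lemma GC.parseval (g : GC F) (P : F → ℝ) :
    ∑ t : F, (∑ ζ : F, P ζ * g.e (t * ζ)) ^ 2
      = (Fintype.card F : ℝ) * ∑ ζ : F, (P ζ) ^ 2 := by
  have expand : ∀ t : F, (∑ ζ : F, P ζ * g.e (t * ζ)) ^ 2
      = ∑ ζ : F, ∑ ζ' : F, P ζ * P ζ' * g.e (t * (ζ + ζ')) := by
    intro t
    rw [sq, Finset.sum_mul_sum]
    refine Finset.sum_congr rfl fun ζ _ => Finset.sum_congr rfl fun ζ' _ => ?_
    rw [mul_add, g.e_add]; ring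
  simp only [expand]
  have swap : ∑ t : F, ∑ ζ : F, ∑ ζ' : F, P ζ * P ζ' * g.e (t * (ζ + ζ'))
      = ∑ ζ : F, ∑ ζ' : F, (P ζ * P ζ') * ∑ t : F, g.e (t * (ζ + ζ')) := by
    rw [Finset.sum_comm]
    refine Finset.sum_congr rfl fun ζ _ => ?_
    rw [Finset.sum_comm]
    exact Finset.sum_congr rfl fun ζ' _ => by rw [Finset.mul_sum]
  rw [swap]
  simp_rw [g.orth]
  have h2 : ∀ ζ ζ' : F, (ζ + ζ' = 0) = (ζ = ζ') := fun ζ ζ' => propext g.add_eq_zero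
  simp_rw [h2, mul_ite, mul_zero]
  rw [Finset.mul_sum]
  refine Finset.sum_congr rfl fun ζ _ => ?_
  rw [Finset.sum_ite_eq]
  simp [sq]
  ring


lemma block (g : GC F) (n : ℕ) (A B : (Fin n → F) → ℝ)
    (hA0 : ∀ v, 0 ≤ A v) (hB0 : ∀ v, 0 ≤ B v) (α γ : ℝ)
    (hα : ∀ v, A v ≤ α) (hγ : ∀ v, B v ≤ γ) :
    ∑ ζ : F, |∑ v : Fin n → F, ∑ w : Fin n → F,
        A v * B w * ((if (∑ i, v i * w i) = ζ then (1:ℝ) else 0) - (Fintype.card F : ℝ)⁻¹)|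
      ≤ Real.sqrt ((Fintype.card F : ℝ) ^ (n + 1) * ((∑ v, A v) * α * ((∑ w, B w) * γ))) := by
  classical
  have hN0 : (0:ℝ) < (Fintype.card F : ℝ) := by exact_mod_cast Fintype.card_pos
  set N : ℝ := (Fintype.card F : ℝ) with hNdef
  have hα0 : 0 ≤ α := le_trans (hA0 (fun _ => 0)) (hα (fun _ => 0))
  have hγ0 : 0 ≤ γ := le_trans (hB0 (fun _ => 0)) (hγ (fun _ => 0))
  set Q : F → ℝ := fun ζ => ∑ v : Fin n → F, ∑ w : Fin n → F,
      A v * B w * ((if (∑ i, v i * w i) = ζ then (1:ℝ) else 0) - N⁻¹) with hQ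
  set S : F → ℝ := fun t => ∑ v : Fin n → F, ∑ w : Fin n → F,
      A v * B w * g.e (t * ∑ i, v i * w i) with hS
  set C : ℝ := (∑ v, A v) * α * ((∑ w, B w) * γ) with hC
  have hC0 : 0 ≤ C := by
    rw [hC]
    have := Finset.sum_nonneg (fun v (_ : v ∈ Finset.univ) => hA0 v)
    have := Finset.sum_nonneg (fun w (_ : w ∈ Finset.univ) => hB0 w)
    positivity
  -- Fourier coefficients of Q away from 0
  have hQhat : ∀ t : F, t ≠ 0 → ∑ ζ : F, Q ζ * g.e (t * ζ) = S t := by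
    intro t ht
    have hexp : ∀ ζ : F, Q ζ * g.e (t * ζ)
        = ∑ v : Fin n → F, ∑ w : Fin n → F, A v * B w *
            (((if (∑ i, v i * w i) = ζ then (1:ℝ) else 0) - N⁻¹) * g.e (t * ζ)) := by
      intro ζ
      rw [hQ]
      rw [Finset.sum_mul]
      refine Finset.sum_congr rfl fun v _ => ?_
      rw [Finset.sum_mul]
      exact Finset.sum_congr rfl fun w _ => by ring
    simp only [hexp]
    rw [Finset.sum_comm]
    refine Finset.sum_congr rfl fun v _ => ?_
    rw [Finset.sum_comm]
    refine Finset.sum_congr rfl fun w _ => ?_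
    rw [← Finset.mul_sum]
    congr 1
    simp_rw [sub_mul]
    rw [Finset.sum_sub_distrib]
    have h1 : ∑ ζ : F, (if (∑ i, v i * w i) = ζ then (1:ℝ) else 0) * g.e (t * ζ)
        = g.e (t * ∑ i, v i * w i) := by
      simp_rw [ite_mul, one_mul, zero_mul]
      rw [Finset.sum_ite_eq]
      simp
    have h2 : ∑ ζ : F, N⁻¹ * g.e (t * ζ) = 0 := by
      rw [← Finset.mul_sum, g.sum_mul_eq t ht, mul_zero]
    rw [h1, h2, sub_zero]
  -- Q sums to zero
  have hQ0 : ∑ ζ : F, Q ζ = 0 := by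
    rw [hQ]
    rw [Finset.sum_comm]
    refine Finset.sum_eq_zero fun v _ => ?_
    rw [Finset.sum_comm]
    refine Finset.sum_eq_zero fun w _ => ?_
    rw [← Finset.mul_sum]
    have h3 : ∑ ζ : F, ((if (∑ i, v i * w i) = ζ then (1:ℝ) else 0) - N⁻¹) = 0 := by
      rw [Finset.sum_sub_distrib, Finset.sum_ite_eq, Finset.sum_const, Finset.card_univ]
      simp only [Finset.mem_univ, if_true, nsmul_eq_mul]
      rw [← hNdef, mul_inv_cancel₀ hN0.ne', sub_self]
    rw [h3, mul_zero]
  -- bound on S t for t ≠ 0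
  have hSbound : ∀ t : F, t ≠ 0 → (S t)^2 ≤ C * N ^ n := by
    intro t ht
    set T : (Fin n → F) → ℝ := fun v => ∑ w, B w * g.e (t * ∑ i, v i * w i) with hT
    have hSt : S t = ∑ v, A v * T v := by
      rw [hS]
      refine Finset.sum_congr rfl fun v _ => ?_
      rw [hT, Finset.mul_sum]
      exact Finset.sum_congr rfl fun w _ => by ring
    have hCS : (S t)^2 ≤ (∑ v, A v) * ∑ v, A v * (T v)^2 := by
      rw [hSt]
      have hrw : ∀ v : Fin n → F, Real.sqrt (A v) * (Real.sqrt (A v) * T v) = A v * T v := by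
        intro v; rw [← mul_assoc, Real.mul_self_sqrt (hA0 v)]
      have hrw2 : ∀ v : Fin n → F, (Real.sqrt (A v))^2 = A v := fun v => Real.sq_sqrt (hA0 v)
      have hrw3 : ∀ v : Fin n → F, (Real.sqrt (A v) * T v)^2 = A v * (T v)^2 := by
        intro v; rw [mul_pow, hrw2]
      calc (∑ v, A v * T v)^2
          = (∑ v, Real.sqrt (A v) * (Real.sqrt (A v) * T v))^2 := by simp_rw [hrw]
        _ ≤ (∑ v, (Real.sqrt (A v))^2) * ∑ v, (Real.sqrt (A v) * T v)^2 :=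
            Finset.sum_mul_sq_le_sq_mul_sq _ _ _
        _ = (∑ v, A v) * ∑ v, A v * (T v)^2 := by simp_rw [hrw2, hrw3]
    have hT2 : ∑ v, (T v)^2 = N ^ n * ∑ w, (B w)^2 := by
      have expand : ∀ v : Fin n → F, (T v)^2
          = ∑ w : Fin n → F, ∑ w' : Fin n → F,
              B w * B w' * g.e (∑ i, (t * (w i + w' i)) * v i) := by
        intro v
        rw [hT, sq, Finset.sum_mul_sum]
        refine Finset.sum_congr rfl fun w _ => Finset.sum_congr rfl fun w' _ => ?_
        rw [mul_mul_mul_comm, ← g.e_add]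
        have harg : t * (∑ i, v i * w i) + t * (∑ i, v i * w' i)
            = ∑ i, (t * (w i + w' i)) * v i := by
          rw [Finset.mul_sum, Finset.mul_sum, ← Finset.sum_add_distrib]
          exact Finset.sum_congr rfl fun i _ => by ring
        rw [harg]
      simp only [expand]
      rw [Finset.sum_comm]
      have swap2 : ∀ w : Fin n → F,
          ∑ v : Fin n → F, ∑ w' : Fin n → F, B w * B w' * g.e (∑ i, (t * (w i + w' i)) * v i)
            = ∑ w' : Fin n → F, (B w * B w') * ∑ v : Fin n → F, g.e (∑ i, (t * (w i + w' i)) * v i) := by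
        intro w
        rw [Finset.sum_comm]
        exact Finset.sum_congr rfl fun w' _ => by rw [Finset.mul_sum]
      simp only [swap2]
      have horth : ∀ w w' : Fin n → F,
          (∑ v : Fin n → F, g.e (∑ i, (t * (w i + w' i)) * v i))
            = if w' = w then N ^ n else 0 := by
        intro w w'
        rw [g.vec_orth]
        have hiff : ((fun i => t * (w i + w' i)) = 0) ↔ (w' = w) := by
          constructor
          · intro h
            funext i
            have hi := congrFun h i
            simp only [Pi.zero_apply] at hi
            rcases mul_eq_zero.mp hi with h' | h'
            · exact absurd h' ht
            · exact (g.add_eq_zero.mp h').symm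
          · rintro rfl
            funext i
            simp [g.add_self]
        rw [if_congr hiff rfl rfl, ← hNdef]
      simp only [horth, mul_ite, mul_zero]
      have hlast : ∀ w : Fin n → F,
          ∑ w' : Fin n → F, (if w' = w then (B w * B w') * N ^ n else 0) = (B w)^2 * N ^ n := by
        intro w
        rw [Finset.sum_ite_eq' Finset.univ w (fun w' => (B w * B w') * N ^ n)]
        simp [sq]
      simp only [hlast]
      rw [Finset.mul_sum]
      exact Finset.sum_congr rfl fun w _ => by ring
    have h4 : ∑ v, A v * (T v)^2 ≤ α * (N ^ n * ∑ w, (B w)^2) := by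
      calc ∑ v, A v * (T v)^2 ≤ ∑ v, α * (T v)^2 :=
            Finset.sum_le_sum fun v _ => mul_le_mul_of_nonneg_right (hα v) (sq_nonneg _)
        _ = α * ∑ v, (T v)^2 := (Finset.mul_sum _ _ _).symm
        _ = α * (N ^ n * ∑ w, (B w)^2) := by rw [hT2]
    have h5 : ∑ w, (B w)^2 ≤ γ * ∑ w, B w := by
      rw [Finset.mul_sum]
      refine Finset.sum_le_sum fun w _ => ?_
      rw [sq]
      exact mul_le_mul_of_nonneg_right (hγ w) (hB0 w)
    have hNn : (0:ℝ) ≤ N ^ n := by positivity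
    calc (S t)^2 ≤ (∑ v, A v) * ∑ v, A v * (T v)^2 := hCS
      _ ≤ (∑ v, A v) * (α * (N ^ n * (γ * ∑ w, B w))) := by
          refine mul_le_mul_of_nonneg_left ?_ (Finset.sum_nonneg fun v _ => hA0 v)
          refine le_trans h4 ?_
          refine mul_le_mul_of_nonneg_left ?_ hα0
          exact mul_le_mul_of_nonneg_left h5 hNn
      _ = C * N ^ n := by rw [hC]; ring
  -- L2 bound on Q via Parseval
  have hQ2 : ∑ ζ : F, (Q ζ)^2 ≤ N ^ n * C := by
    have hpar := g.parseval Q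
    have h0 : (∑ ζ : F, Q ζ * g.e (0 * ζ)) = 0 := by
      simp only [zero_mul, g.e_zero, mul_one]
      exact hQ0
    have h3 : ∑ t : F, (∑ ζ : F, Q ζ * g.e (t * ζ))^2 ≤ N * (N ^ n * C) := by
      calc ∑ t : F, (∑ ζ : F, Q ζ * g.e (t * ζ))^2
          ≤ ∑ _t : F, C * N ^ n := by
            refine Finset.sum_le_sum fun t _ => ?_
            by_cases ht : t = 0
            · subst ht
              rw [h0]
              have : (0:ℝ) ≤ N ^ n := by positivity
              simpa using mul_nonneg hC0 this
            · rw [hQhat t ht]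
              exact hSbound t ht
        _ = N * (N ^ n * C) := by
            rw [Finset.sum_const, Finset.card_univ, nsmul_eq_mul, ← hNdef]
            ring
    rw [← hNdef] at hpar
    rw [hpar] at h3
    exact le_of_mul_le_mul_left h3 hN0
  -- L1 via Cauchy-Schwarz
  have hL1 : (∑ ζ : F, |Q ζ|)^2 ≤ N * ∑ ζ : F, (Q ζ)^2 := by
    have hcs := Finset.sum_mul_sq_le_sq_mul_sq Finset.univ (fun _ : F => (1:ℝ)) (fun ζ => |Q ζ|)
    simp only [one_mul, one_pow, Finset.sum_const, Finset.card_univ, nsmul_eq_mul, mul_one,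
      sq_abs] at hcs
    rw [← hNdef] at hcs
    exact hcs
  have hQnonneg : 0 ≤ ∑ ζ : F, |Q ζ| := Finset.sum_nonneg fun ζ _ => abs_nonneg _
  have hfin : (∑ ζ : F, |Q ζ|)^2 ≤ N ^ (n+1) * C := by
    calc (∑ ζ : F, |Q ζ|)^2 ≤ N * ∑ ζ : F, (Q ζ)^2 := hL1
      _ ≤ N * (N ^ n * C) := mul_le_mul_of_nonneg_left hQ2 hN0.le
      _ = N ^ (n+1) * C := by ring
  calc ∑ ζ : F, |Q ζ| = Real.sqrt ((∑ ζ : F, |Q ζ|)^2) := (Real.sqrt_sq hQnonneg).symm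
    _ ≤ Real.sqrt (N ^ (n+1) * C) := Real.sqrt_le_sqrt hfin


section Hybrid

variable {k n : ℕ}

/-- Truncation of a block sequence to its first `m` blocks. -/
def trunc (m : ℕ) (a : Fin k → Fin n → F) : Fin k → Fin n → F :=
  fun j => if (j : ℕ) < m then a j else 0

lemma trunc_trunc (m : ℕ) (a : Fin k → Fin n → F) :
    trunc (F := F) m (trunc m a) = trunc m a := by
  funext j
  unfold trunc
  by_cases h : (j : ℕ) < m <;> simp [h]

/-- Mass of the fiber of the truncation map, refined by the value of block `ℓ₀`. -/
def blkA (m : ℕ) (ℓ₀ : Fin k) (P : (Fin k → Fin n → F) → ℝ)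
    (w : Fin k → Fin n → F) (v : Fin n → F) : ℝ :=
  ∑ x ∈ Finset.univ.filter (fun x => trunc m x = w ∧ x ℓ₀ = v), P x

/-- Mass of the fiber of the truncation map. -/
def blkM (m : ℕ) (P : (Fin k → Fin n → F) → ℝ) (w : Fin k → Fin n → F) : ℝ :=
  ∑ x ∈ Finset.univ.filter (fun x => trunc m x = w), P x

lemma blkA_nonneg (m : ℕ) (ℓ₀ : Fin k) (P : (Fin k → Fin n → F) → ℝ)
    (hP0 : ∀ a, 0 ≤ P a) (w : Fin k → Fin n → F) (v : Fin n → F) :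
    0 ≤ blkA m ℓ₀ P w v :=
  Finset.sum_nonneg fun x _ => hP0 x

lemma blkM_nonneg (m : ℕ) (P : (Fin k → Fin n → F) → ℝ)
    (hP0 : ∀ a, 0 ≤ P a) (w : Fin k → Fin n → F) :
    0 ≤ blkM m P w :=
  Finset.sum_nonneg fun x _ => hP0 x

lemma sum_blkM (m : ℕ) (P : (Fin k → Fin n → F) → ℝ) :
    ∑ w : Fin k → Fin n → F, blkM m P w = ∑ x : Fin k → Fin n → F, P x :=
  Finset.sum_fiberwise _ _ _

lemma sum_blkA (m : ℕ) (ℓ₀ : Fin k) (P : (Fin k → Fin n → F) → ℝ)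
    (w : Fin k → Fin n → F) :
    ∑ v : Fin n → F, blkA m ℓ₀ P w v = blkM m P w := by
  unfold blkA blkM
  rw [← Finset.sum_fiberwise (Finset.univ.filter (fun x => trunc m x = w)) (fun x => x ℓ₀) P]
  refine Finset.sum_congr rfl fun v _ => ?_
  rw [Finset.filter_filter]

lemma fiber_sum (m : ℕ) (ℓ₀ : Fin k) (P : (Fin k → Fin n → F) → ℝ)
    (Φ : (Fin k → Fin n → F) → (Fin n → F) → ℝ) :
    ∑ x : Fin k → Fin n → F, P x * Φ (trunc m x) (x ℓ₀)
      = ∑ w : Fin k → Fin n → F, ∑ v : Fin n → F, blkA m ℓ₀ P w v * Φ w v := by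
  rw [← Finset.sum_fiberwise Finset.univ (trunc (F := F) m)
    (fun x => P x * Φ (trunc m x) (x ℓ₀))]
  refine Finset.sum_congr rfl fun w _ => ?_
  rw [← Finset.sum_fiberwise (Finset.univ.filter (fun x => trunc m x = w)) (fun x => x ℓ₀)
    (fun x => P x * Φ (trunc m x) (x ℓ₀))]
  refine Finset.sum_congr rfl fun v _ => ?_
  rw [Finset.filter_filter]
  unfold blkA
  rw [Finset.sum_mul]
  refine Finset.sum_congr rfl fun x hx => ?_
  simp only [Finset.mem_filter] at hx
  rw [hx.2.1, hx.2.2]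

lemma trunc_eq_iff (m : ℕ) (hm : m < k) {w : Fin k → Fin n → F}
    (hw : trunc m w = w) (a : Fin k → Fin n → F) :
    trunc m a = w ↔ ∀ j < (⟨m, hm⟩ : Fin k), a j = w j := by
  constructor
  · intro h j hj
    have hj' : (j : ℕ) < m := hj
    have h2 := congrFun h j
    simpa [trunc, hj'] using h2
  · intro h
    funext j
    by_cases hj : (j : ℕ) < m
    · have h2 := h j hj
      simpa [trunc, hj] using h2
    · have h2 := congrFun hw j
      simp only [trunc, if_neg hj] at h2 ⊢
      exact h2

lemma blkA_le (m : ℕ) (hm : m < k) (P : (Fin k → Fin n → F) → ℝ) (β : ℝ) (hβ0 : 0 ≤ β)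
    (hblock : ∀ (ℓ : Fin k) (w : Fin k → Fin n → F) (v : Fin n → F),
      (∑ a ∈ Finset.univ.filter
          (fun a : Fin k → Fin n → F => (∀ j < ℓ, a j = w j) ∧ a ℓ = v), P a)
        ≤ β * ∑ a ∈ Finset.univ.filter
            (fun a : Fin k → Fin n → F => ∀ j < ℓ, a j = w j), P a)
    (w : Fin k → Fin n → F) (v : Fin n → F) :
    blkA m ⟨m, hm⟩ P w v ≤ β * blkM m P w := by
  classical
  by_cases hw : trunc m w = w
  · have e1 : (Finset.univ.filter (fun x : Fin k → Fin n → F => trunc m x = w ∧ x ⟨m, hm⟩ = v))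
        = Finset.univ.filter
            (fun x : Fin k → Fin n → F => (∀ j < (⟨m, hm⟩ : Fin k), x j = w j) ∧ x ⟨m, hm⟩ = v) :=
      Finset.filter_congr fun x _ => by rw [trunc_eq_iff m hm hw]
    have e2 : (Finset.univ.filter (fun x : Fin k → Fin n → F => trunc m x = w))
        = Finset.univ.filter (fun x : Fin k → Fin n → F => ∀ j < (⟨m, hm⟩ : Fin k), x j = w j) :=
      Finset.filter_congr fun x _ => by rw [trunc_eq_iff m hm hw]
    unfold blkA blkM
    rw [e1, e2]
    exact hblock ⟨m, hm⟩ w v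
  · have h1 : (Finset.univ.filter (fun x : Fin k → Fin n → F => trunc m x = w ∧ x ⟨m, hm⟩ = v))
        = ∅ := by
      refine Finset.filter_eq_empty_iff.mpr fun x _ h => ?_
      exact hw (by rw [← h.1, trunc_trunc])
    have h2 : (Finset.univ.filter (fun x : Fin k → Fin n → F => trunc m x = w)) = ∅ := by
      refine Finset.filter_eq_empty_iff.mpr fun x _ h => ?_
      exact hw (by rw [← h, trunc_trunc])
    unfold blkA blkM
    rw [h1, h2]
    simp


/-- Hybrid distributions: first `m` blocks real, rest uniform. -/
noncomputable def Hyb (PX PY : (Fin k → Fin n → F) → ℝ) (m : ℕ) (z : Fin k → F) : ℝ :=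
  ∑ x : Fin k → Fin n → F, ∑ y : Fin k → Fin n → F, PX x * PY y *
    ∏ j : Fin k, (if (j : ℕ) < m
      then (if (∑ i, x j i * y j i) = z j then (1:ℝ) else 0)
      else (Fintype.card F : ℝ)⁻¹)

lemma step (g : GC F) (PX PY : (Fin k → Fin n → F) → ℝ)
    (hPX0 : ∀ a, 0 ≤ PX a) (hPX1 : ∑ a, PX a = 1)
    (hPY0 : ∀ a, 0 ≤ PY a) (hPY1 : ∑ a, PY a = 1)
    (β : ℝ) (hβ0 : 0 ≤ β)
    (hXblock : ∀ (ℓ : Fin k) (w : Fin k → Fin n → F) (v : Fin n → F),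
      (∑ a ∈ Finset.univ.filter
          (fun a : Fin k → Fin n → F => (∀ j < ℓ, a j = w j) ∧ a ℓ = v), PX a)
        ≤ β * ∑ a ∈ Finset.univ.filter
            (fun a : Fin k → Fin n → F => ∀ j < ℓ, a j = w j), PX a)
    (hYblock : ∀ (ℓ : Fin k) (w : Fin k → Fin n → F) (v : Fin n → F),
      (∑ a ∈ Finset.univ.filter
          (fun a : Fin k → Fin n → F => (∀ j < ℓ, a j = w j) ∧ a ℓ = v), PY a)
        ≤ β * ∑ a ∈ Finset.univ.filter
            (fun a : Fin k → Fin n → F => ∀ j < ℓ, a j = w j), PY a)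
    (m : ℕ) (hm : m < k) :
    ∑ z : Fin k → F, |Hyb PX PY (m+1) z - Hyb PX PY m z|
      ≤ Real.sqrt ((Fintype.card F : ℝ) ^ (n + 1) * (β * β)) := by
  classical
  have hN0 : (0:ℝ) < (Fintype.card F : ℝ) := by exact_mod_cast Fintype.card_pos
  set N : ℝ := (Fintype.card F : ℝ) with hNdef
  set ℓ₀ : Fin k := ⟨m, hm⟩ with hℓ₀
  set AX : (Fin k → Fin n → F) → (Fin n → F) → ℝ := blkA m ℓ₀ PX with hAX
  set AY : (Fin k → Fin n → F) → (Fin n → F) → ℝ := blkA m ℓ₀ PY with hAY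
  set MX : (Fin k → Fin n → F) → ℝ := blkM m PX with hMX
  set MY : (Fin k → Fin n → F) → ℝ := blkM m PY with hMY
  set R' : (Fin k → Fin n → F) → (Fin k → Fin n → F) → (Fin k → F) → ℝ :=
    fun wx wy z => ∏ j ∈ Finset.univ.erase ℓ₀,
      (if (j : ℕ) < m
        then (if (∑ i, wx j i * wy j i) = z j then (1:ℝ) else 0)
        else N⁻¹) with hR'
  set cin : (Fin k → Fin n → F) → (Fin k → Fin n → F) → F → ℝ :=
    fun wx wy ζ => ∑ v : Fin n → F, ∑ w : Fin n → F,
      AX wx v * AY wy w * ((if (∑ i, v i * w i) = ζ then (1:ℝ) else 0) - N⁻¹) with hcin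
  have hR'0 : ∀ wx wy z, 0 ≤ R' wx wy z := by
    intro wx wy z
    rw [hR']
    refine Finset.prod_nonneg fun j _ => ?_
    by_cases h1 : (j : ℕ) < m
    · rw [if_pos h1]
      by_cases h2 : (∑ i, wx j i * wy j i) = z j <;> simp [h2]
    · rw [if_neg h1]
      positivity
  -- Step A : the difference of consecutive hybrids
  have stepA : ∀ z : Fin k → F,
      Hyb PX PY (m+1) z - Hyb PX PY m z
        = ∑ wx : Fin k → Fin n → F, ∑ wy : Fin k → Fin n → F,
            R' wx wy z * cin wx wy (z ℓ₀) := by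
    intro z
    have prodd : ∀ x y : Fin k → Fin n → F,
        (∏ j : Fin k, (if (j : ℕ) < m + 1
            then (if (∑ i, x j i * y j i) = z j then (1:ℝ) else 0) else N⁻¹))
        - (∏ j : Fin k, (if (j : ℕ) < m
            then (if (∑ i, x j i * y j i) = z j then (1:ℝ) else 0) else N⁻¹))
        = ((if (∑ i, x ℓ₀ i * y ℓ₀ i) = z ℓ₀ then (1:ℝ) else 0) - N⁻¹)
            * R' (trunc m x) (trunc m y) z := by
      intro x y
      rw [← Finset.mul_prod_erase Finset.univ _ (Finset.mem_univ ℓ₀),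
          ← Finset.mul_prod_erase Finset.univ _ (Finset.mem_univ ℓ₀)]
      have hval : (ℓ₀ : ℕ) = m := rfl
      have hfac : ∀ j ∈ Finset.univ.erase ℓ₀, ∀ (mm : ℕ), (j : ℕ) < mm → mm ≤ m + 1 →
          True := fun _ _ _ _ _ => trivial
      have he1 : ∏ j ∈ Finset.univ.erase ℓ₀,
          (if (j : ℕ) < m + 1 then (if (∑ i, x j i * y j i) = z j then (1:ℝ) else 0) else N⁻¹)
          = R' (trunc m x) (trunc m y) z := by
        rw [hR']
        refine Finset.prod_congr rfl fun j hj => ?_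
        have hjne : j ≠ ℓ₀ := (Finset.mem_erase.mp hj).1
        have hvne : (j : ℕ) ≠ m := fun h => hjne (Fin.ext (by rw [h, hval]))
        by_cases hlt : (j : ℕ) < m
        · rw [if_pos (Nat.lt_succ_of_lt hlt), if_pos hlt]
          have hx : trunc m x j = x j := by simp [trunc, hlt]
          have hy : trunc m y j = y j := by simp [trunc, hlt]
          rw [hx, hy]
        · have h2 : ¬ ((j : ℕ) < m + 1) := by omega
          rw [if_neg h2, if_neg hlt]
      have he2 : ∏ j ∈ Finset.univ.erase ℓ₀,
          (if (j : ℕ) < m then (if (∑ i, x j i * y j i) = z j then (1:ℝ) else 0) else N⁻¹)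
          = R' (trunc m x) (trunc m y) z := by
        rw [hR']
        refine Finset.prod_congr rfl fun j hj => ?_
        by_cases hlt : (j : ℕ) < m
        · rw [if_pos hlt, if_pos hlt]
          have hx : trunc m x j = x j := by simp [trunc, hlt]
          have hy : trunc m y j = y j := by simp [trunc, hlt]
          rw [hx, hy]
        · rw [if_neg hlt, if_neg hlt]
      rw [he1, he2]
      have hc1 : (if (ℓ₀ : ℕ) < m + 1
          then (if (∑ i, x ℓ₀ i * y ℓ₀ i) = z ℓ₀ then (1:ℝ) else 0) else N⁻¹)
          = (if (∑ i, x ℓ₀ i * y ℓ₀ i) = z ℓ₀ then (1:ℝ) else 0) :=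
        if_pos (by rw [hval]; omega)
      have hc2 : (if (ℓ₀ : ℕ) < m
          then (if (∑ i, x ℓ₀ i * y ℓ₀ i) = z ℓ₀ then (1:ℝ) else 0) else N⁻¹) = N⁻¹ :=
        if_neg (by rw [hval]; omega)
      rw [hc1, hc2]
      ring
    calc Hyb PX PY (m+1) z - Hyb PX PY m z
        = ∑ x : Fin k → Fin n → F, ∑ y : Fin k → Fin n → F, PX x * PY y *
            (((if (∑ i, x ℓ₀ i * y ℓ₀ i) = z ℓ₀ then (1:ℝ) else 0) - N⁻¹)
              * R' (trunc m x) (trunc m y) z) := by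
          unfold Hyb
          rw [← Finset.sum_sub_distrib]
          refine Finset.sum_congr rfl fun x _ => ?_
          rw [← Finset.sum_sub_distrib]
          refine Finset.sum_congr rfl fun y _ => ?_
          rw [← mul_sub, prodd x y]
      _ = ∑ x : Fin k → Fin n → F, PX x *
            (∑ y : Fin k → Fin n → F, PY y *
              (((if (∑ i, x ℓ₀ i * y ℓ₀ i) = z ℓ₀ then (1:ℝ) else 0) - N⁻¹)
                * R' (trunc m x) (trunc m y) z)) := by
          refine Finset.sum_congr rfl fun x _ => ?_
          rw [Finset.mul_sum]
          exact Finset.sum_congr rfl fun y _ => by ring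
      _ = ∑ wx : Fin k → Fin n → F, ∑ vx : Fin n → F, AX wx vx *
            (∑ y : Fin k → Fin n → F, PY y *
              (((if (∑ i, vx i * y ℓ₀ i) = z ℓ₀ then (1:ℝ) else 0) - N⁻¹)
                * R' wx (trunc m y) z)) := by
          rw [hAX]
          exact fiber_sum m ℓ₀ PX
            (fun wx vx => ∑ y : Fin k → Fin n → F, PY y *
              (((if (∑ i, vx i * y ℓ₀ i) = z ℓ₀ then (1:ℝ) else 0) - N⁻¹)
                * R' wx (trunc m y) z))
      _ = ∑ wx : Fin k → Fin n → F, ∑ vx : Fin n → F, AX wx vx *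
            (∑ wy : Fin k → Fin n → F, ∑ vy : Fin n → F, AY wy vy *
              (((if (∑ i, vx i * vy i) = z ℓ₀ then (1:ℝ) else 0) - N⁻¹)
                * R' wx wy z)) := by
          refine Finset.sum_congr rfl fun wx _ => Finset.sum_congr rfl fun vx _ => ?_
          congr 1
          rw [hAY]
          exact fiber_sum m ℓ₀ PY
            (fun wy vy => ((if (∑ i, vx i * vy i) = z ℓ₀ then (1:ℝ) else 0) - N⁻¹)
              * R' wx wy z)
      _ = ∑ wx : Fin k → Fin n → F, ∑ wy : Fin k → Fin n → F,
            R' wx wy z * cin wx wy (z ℓ₀) := by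
          refine Finset.sum_congr rfl fun wx _ => ?_
          simp_rw [Finset.mul_sum]
          rw [Finset.sum_comm]
          refine Finset.sum_congr rfl fun wy _ => ?_
          simp only [hcin]
          rw [Finset.mul_sum]
          refine Finset.sum_congr rfl fun vx _ => ?_
          rw [Finset.mul_sum]
          exact Finset.sum_congr rfl fun vy _ => by ring
  -- Step B : summing out the irrelevant coordinates of z
  have stepB : ∀ wx wy : Fin k → Fin n → F,
      ∑ z : Fin k → F, R' wx wy z * |cin wx wy (z ℓ₀)| = ∑ ζ : F, |cin wx wy ζ| := by
    intro wx wy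
    set h : Fin k → F → ℝ := fun j ζ =>
      if j = ℓ₀ then |cin wx wy ζ|
      else (if (j : ℕ) < m then (if (∑ i, wx j i * wy j i) = ζ then (1:ℝ) else 0) else N⁻¹)
      with hh
    have hfac : ∀ z : Fin k → F, R' wx wy z * |cin wx wy (z ℓ₀)| = ∏ j : Fin k, h j (z j) := by
      intro z
      rw [← Finset.mul_prod_erase Finset.univ (fun j => h j (z j)) (Finset.mem_univ ℓ₀)]
      have h1 : h ℓ₀ (z ℓ₀) = |cin wx wy (z ℓ₀)| := by rw [hh]; simp
      have h2 : ∏ j ∈ Finset.univ.erase ℓ₀, h j (z j) = R' wx wy z := by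
        rw [hR']
        refine Finset.prod_congr rfl fun j hj => ?_
        rw [hh]
        simp only [if_neg (Finset.mem_erase.mp hj).1]
      rw [h1, h2]
      ring
    have hsplit : ∑ z : Fin k → F, ∏ j : Fin k, h j (z j) = ∏ j : Fin k, ∑ ζ : F, h j ζ :=
      (Fintype.prod_sum h).symm
    simp_rw [hfac]
    rw [hsplit]
    rw [← Finset.mul_prod_erase Finset.univ (fun j => ∑ ζ : F, h j ζ) (Finset.mem_univ ℓ₀)]
    have h3 : ∑ ζ : F, h ℓ₀ ζ = ∑ ζ : F, |cin wx wy ζ| := by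
      refine Finset.sum_congr rfl fun ζ _ => ?_
      rw [hh]; simp
    have h4 : ∀ j ∈ Finset.univ.erase ℓ₀, (∑ ζ : F, h j ζ) = 1 := by
      intro j hj
      have hjne : j ≠ ℓ₀ := (Finset.mem_erase.mp hj).1
      simp only [hh, if_neg hjne]
      by_cases hlt : (j : ℕ) < m
      · simp only [if_pos hlt]
        rw [Finset.sum_ite_eq]
        simp
      · simp only [if_neg hlt]
        rw [Finset.sum_const, Finset.card_univ, nsmul_eq_mul, ← hNdef,
          mul_inv_cancel₀ hN0.ne']
    rw [h3, Finset.prod_congr rfl h4, Finset.prod_const_one, mul_one]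
  -- Step C : the block lemma, applied per fiber pair
  have stepC : ∀ wx wy : Fin k → Fin n → F,
      ∑ ζ : F, |cin wx wy ζ|
        ≤ Real.sqrt (N ^ (n + 1) * (β * β)) * (MX wx * MY wy) := by
    intro wx wy
    have hbl := block g n (AX wx) (AY wy)
      (fun v => blkA_nonneg m ℓ₀ PX hPX0 wx v) (fun v => blkA_nonneg m ℓ₀ PY hPY0 wy v)
      (β * MX wx) (β * MY wy)
      (fun v => blkA_le m hm PX β hβ0 hXblock wx v)
      (fun v => blkA_le m hm PY β hβ0 hYblock wy v)
    rw [← hNdef] at hbl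
    have hsA : ∑ v, AX wx v = MX wx := sum_blkA m ℓ₀ PX wx
    have hsB : ∑ w, AY wy w = MY wy := sum_blkA m ℓ₀ PY wy
    rw [hsA, hsB] at hbl
    refine le_trans hbl ?_
    have hMX0 : 0 ≤ MX wx := blkM_nonneg m PX hPX0 wx
    have hMY0 : 0 ≤ MY wy := blkM_nonneg m PY hPY0 wy
    have harg : N ^ (n+1) * (MX wx * (β * MX wx) * (MY wy * (β * MY wy)))
        = (N ^ (n+1) * (β * β)) * (MX wx * MY wy)^2 := by ring
    rw [harg, Real.sqrt_mul (by positivity) _, Real.sqrt_sq (mul_nonneg hMX0 hMY0)]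
  -- put everything together
  have hKnn : 0 ≤ Real.sqrt (N ^ (n + 1) * (β * β)) := Real.sqrt_nonneg _
  calc ∑ z : Fin k → F, |Hyb PX PY (m+1) z - Hyb PX PY m z|
      ≤ ∑ z : Fin k → F, ∑ wx : Fin k → Fin n → F, ∑ wy : Fin k → Fin n → F,
          R' wx wy z * |cin wx wy (z ℓ₀)| := by
        refine Finset.sum_le_sum fun z _ => ?_
        rw [stepA z]
        refine le_trans (Finset.abs_sum_le_sum_abs _ _) ?_
        refine Finset.sum_le_sum fun wx _ => ?_
        refine le_trans (Finset.abs_sum_le_sum_abs _ _) ?_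
        refine Finset.sum_le_sum fun wy _ => ?_
        rw [abs_mul, abs_of_nonneg (hR'0 wx wy z)]
    _ = ∑ wx : Fin k → Fin n → F, ∑ wy : Fin k → Fin n → F,
          ∑ z : Fin k → F, R' wx wy z * |cin wx wy (z ℓ₀)| := by
        rw [Finset.sum_comm]
        exact Finset.sum_congr rfl fun wx _ => Finset.sum_comm
    _ = ∑ wx : Fin k → Fin n → F, ∑ wy : Fin k → Fin n → F, ∑ ζ : F, |cin wx wy ζ| :=
        Finset.sum_congr rfl fun wx _ => Finset.sum_congr rfl fun wy _ => stepB wx wy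
    _ ≤ ∑ wx : Fin k → Fin n → F, ∑ wy : Fin k → Fin n → F,
          Real.sqrt (N ^ (n + 1) * (β * β)) * (MX wx * MY wy) :=
        Finset.sum_le_sum fun wx _ => Finset.sum_le_sum fun wy _ => stepC wx wy
    _ = Real.sqrt (N ^ (n + 1) * (β * β)) *
          ((∑ wx : Fin k → Fin n → F, MX wx) * (∑ wy : Fin k → Fin n → F, MY wy)) := by
        rw [Finset.sum_mul_sum, Finset.mul_sum]
        refine Finset.sum_congr rfl fun wx _ => ?_
        rw [Finset.mul_sum]
    _ = Real.sqrt (N ^ (n + 1) * (β * β)) := by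
        rw [hMX, hMY, sum_blkM, sum_blkM, hPX1, hPY1]
        ring

end Hybrid

lemma numeric (n q : ℕ) (δ : ℝ) :
    Real.sqrt (((2:ℝ) ^ q) ^ (n + 1) * ((2:ℝ) ^ (-(δ * q * n)) * (2:ℝ) ^ (-(δ * q * n))))
      ≤ 2 * ((2:ℝ) ^ (2 * (q:ℝ)) * (2:ℝ) ^ (-(2 * δ - 1) * q * n / 2)) := by
  have h2 : (0:ℝ) < 2 := two_pos
  have e1 : ((2:ℝ) ^ q) ^ (n + 1) = (2:ℝ) ^ (((q * (n + 1) : ℕ) : ℝ)) := by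
    rw [Real.rpow_natCast, ← pow_mul]
  have e2 : (2:ℝ) ^ (-(δ * q * n)) * (2:ℝ) ^ (-(δ * q * n))
      = (2:ℝ) ^ (-(δ * q * n) + -(δ * q * n)) := (Real.rpow_add h2 _ _).symm
  rw [e1, e2, ← Real.rpow_add h2]
  rw [Real.sqrt_eq_rpow, ← Real.rpow_mul h2.le]
  have e3 : 2 * ((2:ℝ) ^ (2 * (q:ℝ)) * (2:ℝ) ^ (-(2 * δ - 1) * q * n / 2))
      = (2:ℝ) ^ (1 + (2 * (q:ℝ) + -(2 * δ - 1) * q * n / 2)) := by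
    rw [Real.rpow_add h2, Real.rpow_add h2, Real.rpow_one, mul_assoc]
  rw [e3]
  apply Real.rpow_le_rpow_of_exponent_le one_le_two
  push_cast
  have hq0 : (0:ℝ) ≤ (q:ℝ) := Nat.cast_nonneg q
  nlinarith [hq0]

end Stmt10Aux


/-- Online extractor with equal block lengths (classical side information).
Let `k, n, q ≥ 1`, `1/2 < δ ≤ 1`, and let `F` be the finite field with `2^q` elements. Let
`X = (X⁽¹⁾,…,X⁽ᵏ⁾)` and `Y = (Y⁽¹⁾,…,Y⁽ᵏ⁾)` be independent (the joint distribution being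
the product of the distributions `PX` and `PY`), with each block valued in `Fⁿ`, and suppose
both satisfy the forward block condition with rate `δ`: each block has conditional
probability at most `2^{−δqn}` of any value given any assignment of the previous blocks.
Let `Z⁽ℓ⁾ = Ext_IP(X⁽ℓ⁾, Y⁽ℓ⁾) = Σᵢ X⁽ℓ⁾ᵢ Y⁽ℓ⁾ᵢ`. Then `(Z⁽¹⁾,…,Z⁽ᵏ⁾)` is within
statistical distance `k · 2^{2q} · 2^{−(2δ−1)qn/2}` of uniform on `Fᵏ`. -/
theorem stmt_10 (k n q : ℕ) (hk : 1 ≤ k) (hn : 1 ≤ n) (hq : 1 ≤ q)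
    (δ : ℝ) (hδ : 1 / 2 < δ) (hδ1 : δ ≤ 1)
    (F : Type*) [Field F] [Fintype F] [DecidableEq F]
    (hF : Fintype.card F = 2 ^ q)
    (PX PY : (Fin k → Fin n → F) → ℝ)
    (hPX0 : ∀ a, 0 ≤ PX a) (hPX1 : ∑ a, PX a = 1)
    (hPY0 : ∀ a, 0 ≤ PY a) (hPY1 : ∑ a, PY a = 1)
    (hXblock : ∀ (ℓ : Fin k) (w : Fin k → Fin n → F) (v : Fin n → F),
      (∑ a ∈ Finset.univ.filter
          (fun a : Fin k → Fin n → F => (∀ j < ℓ, a j = w j) ∧ a ℓ = v), PX a)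
        ≤ (2 : ℝ) ^ (-(δ * q * n)) *
          ∑ a ∈ Finset.univ.filter (fun a : Fin k → Fin n → F => ∀ j < ℓ, a j = w j), PX a)
    (hYblock : ∀ (ℓ : Fin k) (w : Fin k → Fin n → F) (v : Fin n → F),
      (∑ a ∈ Finset.univ.filter
          (fun a : Fin k → Fin n → F => (∀ j < ℓ, a j = w j) ∧ a ℓ = v), PY a)
        ≤ (2 : ℝ) ^ (-(δ * q * n)) *
          ∑ a ∈ Finset.univ.filter (fun a : Fin k → Fin n → F => ∀ j < ℓ, a j = w j), PY a) :
    (1 / 2) * ∑ z : Fin k → F,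
        |(∑ x : Fin k → Fin n → F, ∑ y : Fin k → Fin n → F,
            PX x * PY y * (if ∀ ℓ, (∑ i, x ℓ i * y ℓ i) = z ℓ then (1 : ℝ) else 0))
          - (((2 : ℝ) ^ q) ^ k)⁻¹|
      ≤ (k : ℝ) * (2 : ℝ) ^ (2 * (q : ℝ)) * (2 : ℝ) ^ (-(2 * δ - 1) * q * n / 2) := by
  classical
  obtain ⟨g⟩ := Stmt10Aux.gc_exists (F := F) q hq hF
  have hN0 : (0:ℝ) < (Fintype.card F : ℝ) := by exact_mod_cast Fintype.card_pos
  have hcard : (Fintype.card F : ℝ) = (2:ℝ) ^ q := by rw [hF]; push_cast; ring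
  set β : ℝ := (2:ℝ) ^ (-(δ * q * n)) with hβ
  have hβ0 : (0:ℝ) ≤ β := (Real.rpow_pos_of_pos two_pos _).le
  -- identify the target distribution with the top hybrid
  have hHk : ∀ z : Fin k → F,
      (∑ x : Fin k → Fin n → F, ∑ y : Fin k → Fin n → F,
          PX x * PY y * (if ∀ ℓ, (∑ i, x ℓ i * y ℓ i) = z ℓ then (1 : ℝ) else 0))
        = Stmt10Aux.Hyb PX PY k z := by
    intro z
    unfold Stmt10Aux.Hyb
    refine Finset.sum_congr rfl fun x _ => Finset.sum_congr rfl fun y _ => ?_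
    congr 1
    have hfac : ∀ j : Fin k,
        (if (j : ℕ) < k then (if (∑ i, x j i * y j i) = z j then (1:ℝ) else 0)
          else (Fintype.card F : ℝ)⁻¹)
        = (if (∑ i, x j i * y j i) = z j then (1:ℝ) else 0) := fun j => if_pos j.isLt
    rw [Finset.prod_congr rfl fun j _ => hfac j, Fintype.prod_boole]
    by_cases hcond : ∀ ℓ : Fin k, (∑ i, x ℓ i * y ℓ i) = z ℓ
    · rw [if_pos hcond, if_pos hcond]
    · rw [if_neg hcond, if_neg hcond]
  -- identify the uniform distribution with the bottom hybrid
  have hH0 : ∀ z : Fin k → F, Stmt10Aux.Hyb PX PY 0 z = (((2 : ℝ) ^ q) ^ k)⁻¹ := by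
    intro z
    unfold Stmt10Aux.Hyb
    simp only [Nat.not_lt_zero, if_false]
    have hprod : (∏ _j : Fin k, (Fintype.card F : ℝ)⁻¹) = (((2:ℝ) ^ q) ^ k)⁻¹ := by
      rw [Finset.prod_const, Finset.card_univ, Fintype.card_fin, ← inv_pow, hcard]
    simp_rw [hprod, mul_assoc]
    have h1 : ∀ x : Fin k → Fin n → F,
        ∑ y : Fin k → Fin n → F, PX x * (PY y * (((2:ℝ) ^ q) ^ k)⁻¹)
          = PX x * (((2:ℝ) ^ q) ^ k)⁻¹ := by
      intro x
      rw [← Finset.mul_sum, ← Finset.sum_mul, hPY1, one_mul]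
    simp_rw [h1]
    rw [← Finset.sum_mul, hPX1, one_mul]
  -- per-Stmt10Aux.step bound
  have key : ∀ m ∈ Finset.range k,
      ∑ z : Fin k → F, |Stmt10Aux.Hyb PX PY (m+1) z - Stmt10Aux.Hyb PX PY m z|
        ≤ Real.sqrt ((Fintype.card F : ℝ) ^ (n + 1)
            * ((2:ℝ) ^ (-(δ * q * n)) * (2:ℝ) ^ (-(δ * q * n)))) := fun m hm =>
    Stmt10Aux.step g PX PY hPX0 hPX1 hPY0 hPY1 ((2:ℝ) ^ (-(δ * q * n))) hβ0 hXblock hYblock m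
      (Finset.mem_range.mp hm)
  have htel : ∀ z : Fin k → F, Stmt10Aux.Hyb PX PY k z - Stmt10Aux.Hyb PX PY 0 z
      = ∑ m ∈ Finset.range k, (Stmt10Aux.Hyb PX PY (m+1) z - Stmt10Aux.Hyb PX PY m z) :=
    fun z => (Finset.sum_range_sub (fun m => Stmt10Aux.Hyb PX PY m z) k).symm
  calc (1 / 2) * ∑ z : Fin k → F,
        |(∑ x : Fin k → Fin n → F, ∑ y : Fin k → Fin n → F,
            PX x * PY y * (if ∀ ℓ, (∑ i, x ℓ i * y ℓ i) = z ℓ then (1 : ℝ) else 0))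
          - (((2 : ℝ) ^ q) ^ k)⁻¹|
      = (1 / 2) * ∑ z : Fin k → F, |Stmt10Aux.Hyb PX PY k z - Stmt10Aux.Hyb PX PY 0 z| := by
        congr 1
        refine Finset.sum_congr rfl fun z _ => ?_
        rw [hHk z, hH0 z]
    _ ≤ (1 / 2) * ∑ z : Fin k → F,
          ∑ m ∈ Finset.range k, |Stmt10Aux.Hyb PX PY (m+1) z - Stmt10Aux.Hyb PX PY m z| := by
        refine mul_le_mul_of_nonneg_left ?_ (by norm_num)
        refine Finset.sum_le_sum fun z _ => ?_
        rw [htel z]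
        exact Finset.abs_sum_le_sum_abs _ _
    _ = (1 / 2) * ∑ m ∈ Finset.range k,
          ∑ z : Fin k → F, |Stmt10Aux.Hyb PX PY (m+1) z - Stmt10Aux.Hyb PX PY m z| := by
        rw [Finset.sum_comm]
    _ ≤ (1 / 2) * ∑ _m ∈ Finset.range k,
          Real.sqrt ((Fintype.card F : ℝ) ^ (n + 1)
            * ((2:ℝ) ^ (-(δ * q * n)) * (2:ℝ) ^ (-(δ * q * n)))) := by
        exact mul_le_mul_of_nonneg_left (Finset.sum_le_sum key) (by norm_num)
    _ = (1 / 2) * (k * Real.sqrt (((2:ℝ) ^ q) ^ (n + 1)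
          * ((2:ℝ) ^ (-(δ * q * n)) * (2:ℝ) ^ (-(δ * q * n))))) := by
        rw [Finset.sum_const, Finset.card_range, nsmul_eq_mul, hcard]
    _ ≤ (k : ℝ) * (2 : ℝ) ^ (2 * (q : ℝ)) * (2 : ℝ) ^ (-(2 * δ - 1) * q * n / 2) := by
        have hnum := Stmt10Aux.numeric n q δ
        have hk0 : (0:ℝ) ≤ (k:ℝ) := Nat.cast_nonneg k
        nlinarith [mul_le_mul_of_nonneg_left hnum hk0]
end
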